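/- arXiv:1301.1506 — 3 statements merged into one kernel-verified Lean document; each statement's English description precedes it below -/
import Mathlib

section
/- Let M be an irreducible Markov chain on a countable state space V, let N be an M-boundary that is a realisation of the Poisson boundary of M, let s be a sharp harmonic function on V, and let ŝ ∈ L^∞(N) satisfy s(z) = ∫_N ŝ dν_z for every z ∈ V. Then for every z ∈ V, ŝ(η) ∈ {0, 1} for ν_z-almost every η ∈ N. -/
open MeasureTheory Filter Set Topology
open scoped Classical

/-- An irreducible Markov chain on a countable state space `V`, given together with
its family of path-space laws `μ z` (the law of the chain started at `z`),
characterised on cylinder sets by the transition probabilities. -/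
structure MarkovChain (V : Type*) [Countable V] [MeasurableSpace V] where
  /-- transition probabilities -/
  p : V → V → ℝ
  p_nonneg : ∀ x y, 0 ≤ p x y
  p_row_sum : ∀ x, HasSum (p x) 1
  irred : ∀ x y : V, ∃ (n : ℕ) (w : ℕ → V),
    w 0 = x ∧ w n = y ∧ ∀ i < n, 0 < p (w i) (w (i + 1))
  /-- the law of the chain started at `z`, on the path space `ℕ → V` -/
  μ : V → Measure (ℕ → V)
  μ_prob : ∀ z, IsProbabilityMeasure (μ z)
  μ_cyl : ∀ (z : V) (n : ℕ) (w : ℕ → V),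
    (μ z {ω : ℕ → V | ∀ i ≤ n, ω i = w i}).toReal =
      if w 0 = z then ∏ i ∈ Finset.range n, p (w i) (w (i + 1)) else 0

variable {V : Type*} [Countable V] [MeasurableSpace V]

/-- `h : V → ℝ` is harmonic if `h x = ∑_y p x y * h y` for every `x`. -/
def IsHarmonic (M : MarkovChain V) (h : V → ℝ) : Prop :=
  ∀ x, HasSum (fun y => M.p x y * h y) (h x)

/-- The event `1^s` that the values of `s` along the trajectory converge to `1`. -/
def oneEvent (s : V → ℝ) : Set (ℕ → V) :=
  {ω | Tendsto (fun n => s (ω n)) atTop (𝓝 1)}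

/-- The event `0^s` that the values of `s` along the trajectory converge to `0`. -/
def zeroEvent (s : V → ℝ) : Set (ℕ → V) :=
  {ω | Tendsto (fun n => s (ω n)) atTop (𝓝 0)}

/-- A harmonic function `s : V → [0,1]` is sharp if, for every starting state,
the values of `s` along the trajectory of the chain converge to `0` or `1`
almost surely. -/
def IsSharp (M : MarkovChain V) (s : V → ℝ) : Prop :=
  IsHarmonic M s ∧ (∀ x, s x ∈ Set.Icc (0 : ℝ) 1) ∧
  ∀ z, ∀ᵐ ω ∂ M.μ z,
    Tendsto (fun n => s (ω n)) atTop (𝓝 0) ∨ Tendsto (fun n => s (ω n)) atTop (𝓝 1)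

/-- A tail event: a measurable event invariant under deleting the first step. -/
def IsTailEvent (A : Set (ℕ → V)) : Prop :=
  MeasurableSet A ∧ (fun ω : ℕ → V => fun n => ω (n + 1)) ⁻¹' A = A

/-- An `M`-boundary: a measurable space `N` with measures `ν z`, `z ∈ V`, and a
measurable, shift-invariant, measure-preserving map `f` from path space to `N`. -/
structure MBoundary (M : MarkovChain V) (N : Type*) [MeasurableSpace N] where
  ν : V → Measure N
  f : (ℕ → V) → N
  f_meas : Measurable f
  shift_inv : ∀ ω : ℕ → V, f (fun n => ω (n + 1)) = f ω
  meas_pres : ∀ (z : V) (X : Set N), MeasurableSet X → ν z X = M.μ z (f ⁻¹' X)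

/-- The `M`-boundary is faithful to a sharp harmonic function `s` if some measurable
`X ⊆ N` satisfies `μ_z (1^s △ f⁻¹ X) = 0` for every `z`. -/
def Faithful {N : Type*} [MeasurableSpace N] (M : MarkovChain V) (B : MBoundary M N)
    (s : V → ℝ) : Prop :=
  ∃ X : Set N, MeasurableSet X ∧ ∀ z, M.μ z (symmDiff (oneEvent s) (B.f ⁻¹' X)) = 0

/-- The `M`-boundary is a realisation of the Poisson boundary: every bounded harmonic
function is the integral of an essentially unique bounded measurable function on `N`,
and conversely integrating any bounded measurable function on `N` gives a bounded
harmonic function. -/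
def IsRealisation {N : Type*} [MeasurableSpace N] (M : MarkovChain V)
    (B : MBoundary M N) : Prop :=
  (∀ h : V → ℝ, IsHarmonic M h → (∃ C, ∀ x, |h x| ≤ C) →
    ∃ hhat : N → ℝ, Measurable hhat ∧ (∃ C, ∀ η, |hhat η| ≤ C) ∧
      (∀ z, h z = ∫ η, hhat η ∂ B.ν z) ∧
      (∀ g : N → ℝ, Measurable g → (∃ C, ∀ η, |g η| ≤ C) →
        (∀ z, h z = ∫ η, g η ∂ B.ν z) → ∀ z, hhat =ᵐ[B.ν z] g)) ∧
  (∀ g : N → ℝ, Measurable g → (∃ C, ∀ η, |g η| ≤ C) →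
    (∃ C, ∀ z, |∫ η, g η ∂ B.ν z| ≤ C) ∧ IsHarmonic M (fun z => ∫ η, g η ∂ B.ν z))


/-!
Pull the representative back to path space: `G = ŝ ∘ f` is bounded, measurable and invariant
under the shift, and `E_y[G] = s(y)` because `f` is measure preserving. By the Markov property
the conditional expectation of `G` given the first `n + 1` steps is `s(Z^n)`, so Lévy's upward
theorem gives `s(Z^n) → G` almost surely; by sharpness the limit lies in `{0, 1}`.

The σ-algebra on `V` is arbitrary, so cylinder sets need not be measurable on path space. The
cylinder formula nevertheless makes them null measurable, and each law extends to the product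
of the discrete σ-algebras, where the martingale argument is carried out.
-/

open scoped ENNReal

section PathCylinder

variable {S : Type*}

def pathCylinder (n : ℕ) (w : ℕ → S) : Set (ℕ → S) := {ω | ∀ i ≤ n, ω i = w i}

lemma mem_pathCylinder_self (n : ℕ) (w : ℕ → S) : w ∈ pathCylinder n w := fun _ _ => rfl

lemma pathCylinder_congr {n : ℕ} {w w' : ℕ → S} (h : ∀ i ≤ n, w i = w' i) :
    pathCylinder n w = pathCylinder n w' := by
  ext ω
  exact forall₂_congr fun i hi => by rw [h i hi]

lemma pathCylinder_eq_of_mem {n : ℕ} {w ω : ℕ → S} (h : ω ∈ pathCylinder n w) :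
    pathCylinder n ω = pathCylinder n w :=
  pathCylinder_congr h

lemma pathCylinder_anti {m n : ℕ} (h : m ≤ n) (w : ℕ → S) :
    pathCylinder n w ⊆ pathCylinder m w :=
  fun _ hω i hi => hω i (hi.trans h)

lemma pathCylinder_eq_preimage (n : ℕ) (w : ℕ → S) :
    pathCylinder n w =
      Preorder.restrictLe (π := fun _ => S) n ⁻¹' {Preorder.restrictLe n w} := by
  ext ω
  simp [pathCylinder, funext_iff]

lemma pathCylinder_inter_of_le {m n : ℕ} (h : m ≤ n) {v w : ℕ → S}
    (hne : (pathCylinder m v ∩ pathCylinder n w).Nonempty) :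
    pathCylinder m v ∩ pathCylinder n w = pathCylinder n w := by
  obtain ⟨ω, hv, hw⟩ := hne
  rw [inter_eq_right, ← pathCylinder_eq_of_mem hw, ← pathCylinder_eq_of_mem hv]
  exact pathCylinder_anti h ω

lemma countable_range_pathCylinder [Countable S] (n : ℕ) :
    (range (pathCylinder (S := S) n)).Countable := by
  have : pathCylinder (S := S) n =
      (fun u => Preorder.restrictLe (π := fun _ => S) n ⁻¹' {u}) ∘ Preorder.restrictLe n :=
    funext (pathCylinder_eq_preimage n)
  rw [this]
  exact (countable_range _).mono (range_comp_subset_range _ _)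

lemma isPiSystem_pathCylinder :
    IsPiSystem (range fun nw : ℕ × (ℕ → S) => pathCylinder nw.1 nw.2) := by
  rintro _ ⟨⟨m, v⟩, rfl⟩ _ ⟨⟨n, w⟩, rfl⟩ hne
  rcases le_total m n with h | h
  · exact ⟨(n, w), (pathCylinder_inter_of_le h hne).symm⟩
  · rw [inter_comm] at hne ⊢
    exact ⟨(m, v), (pathCylinder_inter_of_le h hne).symm⟩

def pathShift (n : ℕ) (ω : ℕ → S) : ℕ → S := fun i => ω (i + n)

def pathSplice (n : ℕ) (w w' : ℕ → S) : ℕ → S := fun i => if i ≤ n then w i else w' (i - n)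

lemma pathSplice_of_le {n i : ℕ} (w w' : ℕ → S) (h : i ≤ n) : pathSplice n w w' i = w i :=
  if_pos h

lemma pathSplice_add {n : ℕ} {w w' : ℕ → S} (h : w' 0 = w n) (j : ℕ) :
    pathSplice n w w' (n + j) = w' j := by
  rcases j with _ | j
  · exact (pathSplice_of_le w w' le_rfl).trans h.symm
  · simp [pathSplice]

lemma preimage_pathShift_inter_pathCylinder (n k : ℕ) (w w' : ℕ → S) :
    pathShift n ⁻¹' pathCylinder k w' ∩ pathCylinder n w =
      if w' 0 = w n then pathCylinder (n + k) (pathSplice n w w') else ∅ := by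
  split_ifs with h
  · ext ω
    simp only [pathCylinder, pathShift, mem_inter_iff, mem_preimage, mem_ofPred_eq]
    constructor
    · rintro ⟨hk, hn⟩ i hi
      by_cases hin : i ≤ n
      · rw [pathSplice_of_le w w' hin, hn i hin]
      · obtain ⟨j, rfl⟩ := Nat.exists_eq_add_of_le (le_of_not_ge hin)
        rw [pathSplice_add h, ← hk j (by omega), add_comm]
    · intro hω
      refine ⟨fun j hj => ?_, fun i hi => ?_⟩
      · rw [add_comm, hω _ (by omega), pathSplice_add h]
      · rw [hω i (by omega), pathSplice_of_le w w' hi]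
  · refine eq_empty_of_forall_notMem fun ω ⟨hk, hn⟩ => h ?_
    rw [← hn n le_rfl, ← hk 0 k.zero_le, pathShift, zero_add]

lemma prod_pathSplice {M : Type*} [CommMonoid M] (f : S → S → M) (n k : ℕ) {w w' : ℕ → S}
    (h : w' 0 = w n) :
    ∏ i ∈ Finset.range (n + k), f (pathSplice n w w' i) (pathSplice n w w' (i + 1)) =
      (∏ i ∈ Finset.range n, f (w i) (w (i + 1))) *
        ∏ j ∈ Finset.range k, f (w' j) (w' (j + 1)) := by
  rw [Finset.prod_range_add]
  congr 1
  · refine Finset.prod_congr rfl fun i hi => ?_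
    rw [Finset.mem_range] at hi
    rw [pathSplice_of_le w w' hi.le, pathSplice_of_le w w' hi]
  · refine Finset.prod_congr rfl fun j _ => ?_
    rw [pathSplice_add h, add_assoc, pathSplice_add h]

end PathCylinder

section NullMeasurable

variable {α : Type*} [MeasurableSpace α] {μ : Measure α}

lemma nullMeasurableSet_of_measure_add_diff_le {A B : Set α} (hB : NullMeasurableSet B μ)
    (hμB : μ B ≠ ∞) (hAB : A ⊆ B) (h : μ A + μ (B \ A) ≤ μ B) : NullMeasurableSet A μ := by
  set T := toMeasurable μ A ∩ B
  have hT : NullMeasurableSet T μ := (measurableSet_toMeasurable μ A).nullMeasurableSet.inter hB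
  have hAT : A ⊆ T := subset_inter (subset_toMeasurable μ A) hAB
  have hμT : μ T = μ A :=
    le_antisymm ((measure_mono inter_subset_left).trans (measure_toMeasurable A).le)
      (measure_mono hAT)
  have hBA : μ (T \ A) + μ (B \ T) = μ (B \ A) := by
    rw [← measure_inter_add_sdiff₀ (B \ A) hT]
    congr 2 <;> ext ω <;> simp only [T, mem_inter_iff, Set.mem_sdiff] <;> grind
  have hBT : μ T + μ (B \ T) = μ B := by
    rw [← measure_inter_add_sdiff₀ B hT, inter_eq_right.2 inter_subset_right]
  have hfin : μ A + μ (B \ T) ≠ ∞ := by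
    rw [← hμT, hBT]
    exact hμB
  have hnull : μ (T \ A) = 0 := by
    refine nonpos_iff_eq_zero.1 ((ENNReal.add_le_add_iff_left hfin).1 ?_)
    calc μ A + μ (B \ T) + μ (T \ A) = μ A + μ (B \ A) := by rw [← hBA]; ring
      _ ≤ μ B := h
      _ = μ A + μ (B \ T) + 0 := by rw [← hBT, hμT, add_zero]
  exact hT.congr (ae_eq_set.2 ⟨hnull, by rw [sdiff_eq_empty.2 hAT, measure_empty]⟩)

lemma nullMeasurableSet_of_tsum_le {ι : Type*} [Countable ι] {A : ι → Set α} {B : Set α}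
    (hB : NullMeasurableSet B μ) (hμB : μ B ≠ ∞) (hAB : ∀ i, A i ⊆ B) (hBA : B ⊆ ⋃ i, A i)
    (hsum : ∑' i, μ (A i) ≤ μ B) (i : ι) : NullMeasurableSet (A i) μ := by
  refine nullMeasurableSet_of_measure_add_diff_le hB hμB (hAB i) ?_
  have hdiff : B \ A i ⊆ ⋃ j, if j = i then ∅ else A j := by
    intro ω ⟨hωB, hωi⟩
    obtain ⟨j, hj⟩ := mem_iUnion.1 (hBA hωB)
    refine mem_iUnion.2 ⟨j, ?_⟩
    rwa [if_neg (by rintro rfl; exact hωi hj)]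
  calc μ (A i) + μ (B \ A i)
      ≤ μ (A i) + ∑' j, if j = i then 0 else μ (A j) := by
        gcongr
        refine (measure_mono hdiff).trans
          ((measure_iUnion_le _).trans_eq (tsum_congr fun j => ?_))
        split_ifs <;> simp
    _ = ∑' j, μ (A j) := (ENNReal.tsum_eq_add_tsum_ite (f := fun j => μ (A j)) i).symm
    _ ≤ μ B := hsum

end NullMeasurable

lemma setIntegral_preimage_eq_of_fiber {Ω T E : Type*} [MeasurableSpace Ω] [MeasurableSpace T]
    [Countable T] [MeasurableSingletonClass T] [NormedAddCommGroup E] [NormedSpace ℝ E]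
    {μ : Measure Ω} {π : Ω → T} (hπ : Measurable π) {f g : Ω → E} (hf : Integrable f μ)
    (hg : Integrable g μ)
    (hfg : ∀ ω, ∫ x in π ⁻¹' {π ω}, f x ∂μ = ∫ x in π ⁻¹' {π ω}, g x ∂μ) (t : Set T) :
    ∫ x in π ⁻¹' t, f x ∂μ = ∫ x in π ⁻¹' t, g x ∂μ := by
  have hfiber : ∀ u, ∫ x in π ⁻¹' {u}, f x ∂μ = ∫ x in π ⁻¹' {u}, g x ∂μ := by
    intro u
    rcases (π ⁻¹' {u}).eq_empty_or_nonempty with h | ⟨ω, rfl⟩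
    · simp [h]
    · exact hfg ω
  have ht : π ⁻¹' t = ⋃ u : t, π ⁻¹' {(u : T)} := by ext; simp
  have hmeas : ∀ u : t, MeasurableSet (π ⁻¹' {(u : T)}) :=
    fun _ => hπ (measurableSet_singleton _)
  have hdisj : Pairwise (Function.onFun Disjoint fun u : t => π ⁻¹' {(u : T)}) :=
    fun u v huv => (disjoint_singleton.2 (Subtype.coe_injective.ne huv)).preimage π
  rw [ht, integral_iUnion hmeas hdisj hf.integrableOn,
    integral_iUnion hmeas hdisj hg.integrableOn]
  exact tsum_congr fun u => hfiber u

section PathSpace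

open MeasurableSpace

variable {S : Type*} [MeasurableSpace S]

lemma measurable_pathShift (n : ℕ) : Measurable (pathShift (S := S) n) :=
  measurable_pi_lambda _ fun i => measurable_pi_apply (i + n)

lemma iSup_piLE : ⨆ n, Filtration.piLE (X := fun _ : ℕ => S) n = MeasurableSpace.pi := by
  refine le_antisymm (iSup_le Filtration.piLE.le) (iSup_le fun i => le_trans ?_ (le_iSup _ i))
  have : (fun ω : ℕ → S => ω i) =
      (fun u : (j : Iic i) → S => u ⟨i, mem_Iic.2 le_rfl⟩) ∘ Preorder.restrictLe i := rfl
  rw [this, ← MeasurableSpace.comap_comp]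
  exact MeasurableSpace.comap_mono (measurable_pi_apply _).comap_le

variable [MeasurableSingletonClass S]

lemma measurableSet_pathCylinder (n : ℕ) (w : ℕ → S) : MeasurableSet (pathCylinder n w) := by
  rw [pathCylinder_eq_preimage]
  exact Preorder.measurable_restrictLe n (measurableSet_singleton _)

variable [Countable S]

lemma generateFrom_pathCylinder :
    generateFrom (range fun nw : ℕ × (ℕ → S) => pathCylinder nw.1 nw.2) =
      MeasurableSpace.pi := by
  refine le_antisymm (generateFrom_le ?_) (iSup_le fun i => Measurable.comap_le ?_)
  · rintro _ ⟨⟨n, w⟩, rfl⟩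
    exact measurableSet_pathCylinder n w
  refine @measurable_to_countable' S (ℕ → S) _ _ (generateFrom _) (fun ω => ω i) fun x => ?_
  have : (fun ω : ℕ → S => ω i) ⁻¹' {x} = ⋃₀ (pathCylinder i '' {ω | ω i = x}) := by
    ext ω
    simp only [mem_preimage, mem_singleton_iff, sUnion_image, mem_iUnion, exists_prop]
    exact ⟨fun h => ⟨ω, h, mem_pathCylinder_self i ω⟩, fun ⟨v, hv, hω⟩ => hv ▸ hω i le_rfl⟩
  rw [this]
  refine .sUnion ((countable_range_pathCylinder i).mono (image_subset_range _ _)) ?_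
  rintro _ ⟨v, -, rfl⟩
  exact measurableSet_generateFrom ⟨(i, v), rfl⟩

lemma MeasureTheory.Measure.ext_of_pathCylinder {μ ν : Measure (ℕ → S)} [IsFiniteMeasure μ]
    (h : ∀ n w, μ (pathCylinder n w) = ν (pathCylinder n w)) (huniv : μ univ = ν univ) :
    μ = ν :=
  ext_of_generate_finite _ generateFrom_pathCylinder.symm isPiSystem_pathCylinder
    (by rintro _ ⟨⟨n, w⟩, rfl⟩; exact h n w) huniv

end PathSpace

namespace MarkovChain

section CylinderMeasure

variable (M : MarkovChain V)

instance (y : V) : IsProbabilityMeasure (M.μ y) := M.μ_prob y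

lemma measure_pathCylinder (y : V) (n : ℕ) (w : ℕ → V) :
    M.μ y (pathCylinder n w) =
      ENNReal.ofReal (if w 0 = y then ∏ i ∈ Finset.range n, M.p (w i) (w (i + 1)) else 0) := by
  rw [← M.μ_cyl y n w, ENNReal.ofReal_toReal (measure_ne_top _ _)]
  rfl

lemma measure_pathCylinder_zero (y : V) (w : ℕ → V) :
    M.μ y (pathCylinder 0 w) = if w 0 = y then 1 else 0 := by
  rw [measure_pathCylinder]
  split_ifs <;> simp

lemma measure_pathCylinder_succ (y : V) (n : ℕ) (w : ℕ → V) :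
    M.μ y (pathCylinder (n + 1) w) =
      M.μ y (pathCylinder n w) * ENNReal.ofReal (M.p (w n) (w (n + 1))) := by
  simp only [measure_pathCylinder]
  split_ifs
  · rw [Finset.prod_range_succ,
      ENNReal.ofReal_mul (Finset.prod_nonneg fun _ _ => M.p_nonneg _ _)]
  · simp

lemma tsum_ofReal_p_eq_one (x : V) : ∑' y, ENNReal.ofReal (M.p x y) = 1 := by
  rw [← ENNReal.ofReal_tsum_of_nonneg (M.p_nonneg x) (M.p_row_sum x).summable,
    (M.p_row_sum x).tsum_eq, ENNReal.ofReal_one]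

lemma tsum_measure_pathCylinder_update (y : V) (n : ℕ) (w : ℕ → V) :
    ∑' x, M.μ y (pathCylinder (n + 1) (Function.update w (n + 1) x)) =
      M.μ y (pathCylinder n w) := by
  have hw : ∀ x, pathCylinder n (Function.update w (n + 1) x) = pathCylinder n w := fun x =>
    pathCylinder_congr fun i hi => Function.update_of_ne (by omega) _ _
  simp only [measure_pathCylinder_succ, hw, Function.update_self,
    Function.update_of_ne n.succ_ne_self.symm, ENNReal.tsum_mul_left, tsum_ofReal_p_eq_one,
    mul_one]

/-- The one-step extensions of a cylinder share out its whole mass, so a cylinder is null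
measurable as soon as its parent is. -/
lemma nullMeasurableSet_pathCylinder (y : V) (n : ℕ) (w : ℕ → V) :
    NullMeasurableSet (pathCylinder n w) (M.μ y) := by
  induction n generalizing w with
  | zero =>
    have hw : pathCylinder 0 w = pathCylinder 0 fun _ => w 0 :=
      pathCylinder_congr fun i hi => by rw [Nat.le_zero.1 hi]
    rw [hw]
    refine nullMeasurableSet_of_tsum_le (A := fun x => pathCylinder 0 fun _ => x)
      nullMeasurableSet_univ (measure_ne_top _ _) (fun _ => subset_univ _)
      (fun ω _ => mem_iUnion.2 ⟨ω 0, fun i hi => by rw [Nat.le_zero.1 hi]⟩) ?_ (w 0)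
    simp [measure_pathCylinder_zero]
  | succ n ih =>
    rw [← Function.update_eq_self (n + 1) w]
    refine nullMeasurableSet_of_tsum_le
      (A := fun x => pathCylinder (n + 1) (Function.update w (n + 1) x))
      (ih w) (measure_ne_top _ _) (fun x => ?_) (fun ω hω => mem_iUnion.2 ⟨ω (n + 1), ?_⟩)
      (M.tsum_measure_pathCylinder_update y n w).le (w (n + 1))
    · refine (pathCylinder_anti n.le_succ _).trans_eq (pathCylinder_congr fun i hi => ?_)
      exact Function.update_of_ne (by omega) _ _
    · intro i hi
      rcases hi.lt_or_eq with hi | rfl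
      · rw [Function.update_of_ne (by omega)]
        exact hω i (by omega)
      · rw [Function.update_self]

end CylinderMeasure

section Discrete

variable {S : Type*} [Countable S] [MeasurableSpace S] [MeasurableSingletonClass S]
  (M : MarkovChain S) {G : (ℕ → S) → ℝ}

lemma map_pathShift_restrict_pathCylinder (z : S) (n : ℕ) (w : ℕ → S) :
    ((M.μ z).restrict (pathCylinder n w)).map (pathShift n) =
      M.μ z (pathCylinder n w) • M.μ (w n) := by
  refine Measure.ext_of_pathCylinder (fun k w' => ?_) ?_
  · rw [Measure.map_apply (measurable_pathShift n) (measurableSet_pathCylinder k w'),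
      Measure.restrict_apply (measurable_pathShift n (measurableSet_pathCylinder k w')),
      preimage_pathShift_inter_pathCylinder, Measure.smul_apply, smul_eq_mul]
    split_ifs with h
    · simp only [measure_pathCylinder, pathSplice_of_le _ _ n.zero_le,
        prod_pathSplice _ n k h, if_pos h]
      split_ifs
      · exact ENNReal.ofReal_mul (Finset.prod_nonneg fun _ _ => M.p_nonneg _ _)
      · simp
    · rw [measure_empty, M.measure_pathCylinder (w n) k w', if_neg h, ENNReal.ofReal_zero,
        mul_zero]
  · rw [Measure.map_apply (measurable_pathShift n) MeasurableSet.univ, preimage_univ,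
      Measure.restrict_apply_univ, Measure.smul_apply, measure_univ, smul_eq_mul, mul_one]

lemma setIntegral_pathCylinder_of_shiftInvariant (hG : Measurable G)
    (hinv : ∀ ω, G (pathShift 1 ω) = G ω) (z : S) (n : ℕ) (w : ℕ → S) :
    ∫ ω in pathCylinder n w, G ω ∂M.μ z =
      (M.μ z (pathCylinder n w)).toReal * ∫ ω, G ω ∂M.μ (w n) := by
  have hinv_n : ∀ ω, G (pathShift n ω) = G ω := by
    induction n with
    | zero => exact fun ω => rfl
    | succ n ih => exact fun ω => (ih (pathShift 1 ω)).trans (hinv ω)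
  calc ∫ ω in pathCylinder n w, G ω ∂M.μ z
      = ∫ ω in pathCylinder n w, G (pathShift n ω) ∂M.μ z := by simp only [hinv_n]
    _ = ∫ ω, G ω ∂((M.μ z).restrict (pathCylinder n w)).map (pathShift n) :=
        (integral_map (measurable_pathShift n).aemeasurable hG.aestronglyMeasurable).symm
    _ = (M.μ z (pathCylinder n w)).toReal * ∫ ω, G ω ∂M.μ (w n) := by
        rw [map_pathShift_restrict_pathCylinder, integral_smul_measure, smul_eq_mul]

lemma condExp_piLE_of_shiftInvariant (hG : Measurable G) {C : ℝ} (hC : ∀ ω, |G ω| ≤ C)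
    (hinv : ∀ ω, G (pathShift 1 ω) = G ω) (z : S) (n : ℕ) :
    (M.μ z)[G | Filtration.piLE n] =ᵐ[M.μ z] fun ω => ∫ ω', G ω' ∂M.μ (ω n) := by
  have hbound : ∀ y, ‖∫ ω, G ω ∂M.μ y‖ ≤ C := fun y =>
    (norm_integral_le_of_norm_le_const (Eventually.of_forall hC)).trans_eq (by simp)
  have hmeas : Measurable[Filtration.piLE n] fun ω : ℕ → S => ∫ ω', G ω' ∂M.μ (ω n) := by
    have hrestrict : Measurable[Filtration.piLE n] (Preorder.restrictLe (π := fun _ => S) n) :=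
      comap_measurable _
    exact ((measurable_of_countable fun y => ∫ ω', G ω' ∂M.μ y).comp
      (measurable_pi_apply (⟨n, mem_Iic.2 le_rfl⟩ : Iic n))).comp hrestrict
  have hGint : ∀ y, Integrable G (M.μ y) := fun y =>
    .of_bound hG.aestronglyMeasurable C (Eventually.of_forall hC)
  have hint : Integrable (fun ω : ℕ → S => ∫ ω', G ω' ∂M.μ (ω n)) (M.μ z) :=
    .of_bound (hmeas.mono (Filtration.piLE.le n) le_rfl).aestronglyMeasurable C
      (Eventually.of_forall fun ω => hbound _)
  refine (ae_eq_condExp_of_forall_setIntegral_eq _ (hGint z) (fun _ _ _ => hint.integrableOn)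
    ?_ hmeas.aestronglyMeasurable).symm
  rintro _ ⟨t, ht, rfl⟩ -
  refine setIntegral_preimage_eq_of_fiber (Preorder.measurable_restrictLe n) hint (hGint z)
    (fun ω₀ => ?_) t
  rw [← pathCylinder_eq_preimage, setIntegral_pathCylinder_of_shiftInvariant M hG hinv,
    setIntegral_congr_fun (measurableSet_pathCylinder n ω₀) fun ω hω => by rw [hω n le_rfl],
    setIntegral_const, smul_eq_mul, measureReal_def]

theorem ae_tendsto_integral_of_shiftInvariant_of_measurableSingletonClass (hG : Measurable G)
    {C : ℝ} (hC : ∀ ω, |G ω| ≤ C) (hinv : ∀ ω, G (pathShift 1 ω) = G ω) (z : S) :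
    ∀ᵐ ω ∂M.μ z, Tendsto (fun n => ∫ ω', G ω' ∂M.μ (ω n)) atTop (𝓝 (G ω)) := by
  have hGint : Integrable G (M.μ z) :=
    .of_bound hG.aestronglyMeasurable C (Eventually.of_forall hC)
  have hlevy := hGint.tendsto_ae_condExp (ℱ := Filtration.piLE)
    (by rw [iSup_piLE]; exact hG.stronglyMeasurable)
  filter_upwards [hlevy, ae_all_iff.2 (M.condExp_piLE_of_shiftInvariant hG hC hinv z)]
    with ω hlim hcond
  exact hlim.congr hcond

end Discrete

section Extension

variable (M : MarkovChain V)

omit [Countable V] in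
lemma pi_le_pi_top :
    (MeasurableSpace.pi : MeasurableSpace (ℕ → V)) ≤
      @MeasurableSpace.pi ℕ (fun _ => V) fun _ => ⊤ :=
  iSup_mono fun _ => MeasurableSpace.comap_mono le_top

lemma pi_top_le_caratheodory (y : V) :
    @MeasurableSpace.pi ℕ (fun _ => V) (fun _ => ⊤) ≤ (M.μ y).toOuterMeasure.caratheodory := by
  rw [← @generateFrom_pathCylinder V ⊤ _ _]
  refine MeasurableSpace.generateFrom_le ?_
  rintro _ ⟨⟨n, w⟩, rfl⟩ t
  exact (measure_inter_add_sdiff₀ t (M.nullMeasurableSet_pathCylinder y n w)).symm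

noncomputable def discreteLaw (y : V) :
    @Measure (ℕ → V) (@MeasurableSpace.pi ℕ (fun _ => V) fun _ => ⊤) :=
  @OuterMeasure.toMeasure _ (@MeasurableSpace.pi ℕ (fun _ => V) fun _ => ⊤)
    (M.μ y).toOuterMeasure (M.pi_top_le_caratheodory y)

lemma discreteLaw_apply (y : V) {A : Set (ℕ → V)}
    (hA : MeasurableSet[@MeasurableSpace.pi ℕ (fun _ => V) fun _ => ⊤] A) :
    M.discreteLaw y A = M.μ y A :=
  @toMeasure_apply _ (@MeasurableSpace.pi ℕ (fun _ => V) fun _ => ⊤) _ _ _ hA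

noncomputable def toDiscrete : @MarkovChain V _ ⊤ :=
  @MarkovChain.mk V _ ⊤ M.p M.p_nonneg M.p_row_sum M.irred M.discreteLaw
    (fun y => @IsProbabilityMeasure.mk _ (@MeasurableSpace.pi ℕ (fun _ => V) fun _ => ⊤) _
      ((M.discreteLaw_apply y
        (@MeasurableSet.univ _ (@MeasurableSpace.pi ℕ (fun _ => V) fun _ => ⊤))).trans
          measure_univ))
    (fun y n w => (congrArg ENNReal.toReal
      (M.discreteLaw_apply y (@measurableSet_pathCylinder V ⊤ _ n w))).trans (M.μ_cyl y n w))

lemma trim_discreteLaw (y : V) :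
    @Measure.trim _ _ (@MeasurableSpace.pi ℕ (fun _ => V) fun _ => ⊤) (M.discreteLaw y)
      pi_le_pi_top = M.μ y :=
  Measure.ext fun A hA => by
    rw [trim_measurableSet_eq _ hA, M.discreteLaw_apply y (pi_le_pi_top _ hA)]

lemma ae_of_ae_discreteLaw {y : V} {P : (ℕ → V) → Prop} (h : ∀ᵐ ω ∂M.discreteLaw y, P ω) :
    ∀ᵐ ω ∂M.μ y, P ω :=
  ae_iff.2 <| nonpos_iff_eq_zero.1 <|
    (le_toMeasure_apply (ms := @MeasurableSpace.pi ℕ (fun _ => V) fun _ => ⊤) _ _ _).trans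
      (ae_iff.1 h).le

theorem ae_tendsto_integral_of_shiftInvariant {G : (ℕ → V) → ℝ} (hG : Measurable G) {C : ℝ}
    (hC : ∀ ω, |G ω| ≤ C) (hinv : ∀ ω, G (pathShift 1 ω) = G ω) (z : V) :
    ∀ᵐ ω ∂M.μ z, Tendsto (fun n => ∫ ω', G ω' ∂M.μ (ω n)) atTop (𝓝 (G ω)) := by
  have hG' : Measurable[@MeasurableSpace.pi ℕ (fun _ => V) (fun _ => ⊤)] G :=
    hG.mono pi_le_pi_top le_rfl
  have hint : ∀ y, ∫ ω, G ω ∂M.discreteLaw y = ∫ ω, G ω ∂M.μ y := fun y => by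
    rw [← M.trim_discreteLaw y, integral_trim _ hG.stronglyMeasurable]
  have h := @ae_tendsto_integral_of_shiftInvariant_of_measurableSingletonClass V _ ⊤ _
    M.toDiscrete G hG' C hC hinv z
  simp only [toDiscrete, hint] at h
  exact M.ae_of_ae_discreteLaw h

end Extension

end MarkovChain

theorem sharp_representative_ae_zero_or_one_general {N : Type*} [MeasurableSpace N]
    (M : MarkovChain V) (B : MBoundary M N)
    (s : V → ℝ) (hs : IsSharp M s)
    (shat : N → ℝ) (hmeas : Measurable shat) (hbd : ∃ C, ∀ η, |shat η| ≤ C)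
    (hrep : ∀ z, s z = ∫ η, shat η ∂ B.ν z) :
    ∀ z, ∀ᵐ η ∂ B.ν z, shat η = 0 ∨ shat η = 1 := by
  intro z
  obtain ⟨C, hC⟩ := hbd
  have hν : ∀ y, B.ν y = (M.μ y).map B.f := fun y => Measure.ext fun X hX => by
    rw [Measure.map_apply B.f_meas hX, B.meas_pres y X hX]
  have hmean : ∀ y, ∫ ω, shat (B.f ω) ∂M.μ y = s y := fun y => by
    rw [hrep, hν, integral_map B.f_meas.aemeasurable hmeas.aestronglyMeasurable]
  have hlim := M.ae_tendsto_integral_of_shiftInvariant (hmeas.comp B.f_meas) (fun ω => hC _)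
    (fun ω => congrArg shat (B.shift_inv ω)) z
  simp only [Function.comp_apply, hmean] at hlim
  rw [hν z]
  refine (ae_map_iff B.f_meas.aemeasurable
    ((hmeas (measurableSet_singleton 0)).union (hmeas (measurableSet_singleton 1)))).2 ?_
  filter_upwards [hlim, hs.2.2 z] with ω hω hsharp
  exact hsharp.imp (tendsto_nhds_unique hω) (tendsto_nhds_unique hω)

/-- If `N` is a realisation of the Poisson boundary, `s` is a sharp
harmonic function and `shat ∈ L^∞(N)` represents it, then `shat ∈ {0,1}`
almost everywhere with respect to every `ν z`. -/
theorem sharp_representative_ae_zero_or_one {N : Type*} [MeasurableSpace N]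
    (M : MarkovChain V) (B : MBoundary M N) (hreal : IsRealisation M B)
    (s : V → ℝ) (hs : IsSharp M s)
    (shat : N → ℝ) (hmeas : Measurable shat) (hbd : ∃ C, ∀ η, |shat η| ≤ C)
    (hrep : ∀ z, s z = ∫ η, shat η ∂ B.ν z) :
    ∀ z, ∀ᵐ η ∂ B.ν z, shat η = 0 ∨ shat η = 1 :=
  sharp_representative_ae_zero_or_one_general M B s hs shat hmeas hbd hrep
end

section
/- Let M be an irreducible Markov chain on a countable state space V and let s be a sharp harmonic function on V that is not identically 0. Then for every ε > 0 there exists z ∈ V with s(z) > 1 − ε. -/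
open MeasureTheory Filter Set Topology
open scoped Classical

variable {V : Type*} [Countable V] [MeasurableSpace V]

namespace SharpAux

open ENNReal

/-- Transition probabilities as `ℝ≥0∞`. -/
noncomputable def pE (M : MarkovChain V) (x y : V) : ℝ≥0∞ := ENNReal.ofReal (M.p x y)

/-- Extension of a finite path to an infinite one. -/
def ext {n : ℕ} (g : Fin (n + 1) → V) : ℕ → V := fun i => g ⟨min i n, by omega⟩

/-- Weight (probability) of a finite path started at `z`. -/
noncomputable def prodP (M : MarkovChain V) {n : ℕ} (g : Fin (n + 1) → V) : ℝ≥0∞ :=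
  ∏ i ∈ Finset.range n, pE M (ext g i) (ext g (i + 1))

noncomputable def wgt (M : MarkovChain V) (z : V) {n : ℕ} (g : Fin (n + 1) → V) : ℝ≥0∞ :=
  if ext g 0 = z then prodP M g else 0

lemma ext_le {n : ℕ} (g : Fin (n + 1) → V) {i : ℕ} (hi : i ≤ n) :
    ext g i = g ⟨i, by omega⟩ := by
  unfold ext
  congr 1
  exact Fin.ext (Nat.min_eq_left hi)

lemma ext_cons_zero {n : ℕ} (y : V) (h : Fin (n + 1) → V) :
    ext (Fin.cons y h : Fin (n + 2) → V) 0 = y := by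
  rw [ext_le _ (Nat.zero_le _)]
  have h0 : (⟨0, by omega⟩ : Fin (n + 2)) = 0 := rfl
  rw [h0]
  exact Fin.cons_zero (α := fun _ : Fin (n + 2) => V) y h

lemma ext_cons_succ {n : ℕ} (y : V) (h : Fin (n + 1) → V) (i : ℕ) :
    ext (Fin.cons y h : Fin (n + 2) → V) (i + 1) = ext h i := by
  unfold ext
  have h1 : (⟨min (i + 1) (n + 1), by omega⟩ : Fin (n + 2)) =
      Fin.succ ⟨min i n, by omega⟩ := by
    ext
    simp [Nat.succ_min_succ]
  rw [h1, Fin.cons_succ]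

lemma pE_row (M : MarkovChain V) (x : V) : ∑' y, pE M x y = 1 := by
  have h := M.p_row_sum x
  have h2 := ENNReal.ofReal_tsum_of_nonneg (M.p_nonneg x) h.summable
  rw [h.tsum_eq] at h2
  simpa [pE] using h2.symm

lemma harmE (M : MarkovChain V) {s : V → ℝ} (hh : IsHarmonic M s) (hnn : ∀ x, 0 ≤ s x)
    (x : V) : ∑' y, pE M x y * ENNReal.ofReal (s y) = ENNReal.ofReal (s x) := by
  have h := hh x
  have h2 := ENNReal.ofReal_tsum_of_nonneg
    (fun y => mul_nonneg (M.p_nonneg x y) (hnn y)) h.summable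
  rw [h.tsum_eq] at h2
  calc ∑' y, pE M x y * ENNReal.ofReal (s y)
      = ∑' y, ENNReal.ofReal (M.p x y * s y) :=
        tsum_congr fun y => (ENNReal.ofReal_mul (M.p_nonneg x y)).symm
    _ = ENNReal.ofReal (s x) := h2.symm

/-- The fundamental algebraic identity: summing a "harmonic" `ℝ≥0∞`-valued function
against the path weights reproduces its value at the start. -/
lemma wgt_sum (M : MarkovChain V) (u : V → ℝ≥0∞)
    (hu : ∀ x, ∑' y, pE M x y * u y = u x) :
    ∀ (n : ℕ) (z : V), ∑' g : Fin (n + 1) → V, wgt M z g * u (ext g n) = u z := by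
  intro n
  induction n with
  | zero =>
    intro z
    rw [← (Equiv.funUnique (Fin 1) V).symm.tsum_eq]
    have key : ∀ v : V,
        wgt M z ((Equiv.funUnique (Fin 1) V).symm v) *
          u (ext ((Equiv.funUnique (Fin 1) V).symm v) 0) =
        if v = z then u z else 0 := by
      intro v
      have h0 : ext ((Equiv.funUnique (Fin 1) V).symm v) 0 = v := by
        rw [ext_le _ (le_refl 0)]; rfl
      simp only [wgt, prodP, h0, Finset.range_zero, Finset.prod_empty]
      split_ifs with hvz <;> simp [hvz]
    rw [tsum_congr key, tsum_ite_eq]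
  | succ n IH =>
    intro z
    rw [← (Fin.consEquiv (fun _ : Fin (n + 2) => V)).tsum_eq, ENNReal.tsum_prod']
    have hterm : ∀ (y : V) (h : Fin (n + 1) → V),
        wgt M z ((Fin.consEquiv (fun _ : Fin (n + 2) => V)) (y, h)) *
          u (ext ((Fin.consEquiv (fun _ : Fin (n + 2) => V)) (y, h)) (n + 1)) =
        if y = z then pE M z (ext h 0) * prodP M h * u (ext h n) else 0 := by
      intro y h
      have hc : (Fin.consEquiv (fun _ : Fin (n + 2) => V)) (y, h) = Fin.cons y h := rfl
      rw [hc, ext_cons_succ]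
      unfold wgt
      rw [ext_cons_zero]
      have hp : prodP M (Fin.cons y h : Fin (n + 2) → V) =
          pE M y (ext h 0) * prodP M h := by
        unfold prodP
        rw [Finset.prod_range_succ']
        have h1 : ∀ i ∈ Finset.range n,
            pE M (ext (Fin.cons y h : Fin (n + 2) → V) (i + 1))
              (ext (Fin.cons y h : Fin (n + 2) → V) (i + 1 + 1)) =
            pE M (ext h i) (ext h (i + 1)) := by
          intro i _
          rw [ext_cons_succ, ext_cons_succ]
        rw [Finset.prod_congr rfl h1, ext_cons_zero, ext_cons_succ]
        ring
      rw [hp]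
      split_ifs with hyz
      · rw [hyz]
      · simp
    rw [tsum_congr fun y => tsum_congr fun h => hterm y h]
    have hpull : ∀ y : V,
        (∑' h : Fin (n + 1) → V,
          if y = z then pE M z (ext h 0) * prodP M h * u (ext h n) else 0) =
        if y = z then
          (∑' h : Fin (n + 1) → V, pE M z (ext h 0) * prodP M h * u (ext h n)) else 0 := by
      intro y
      split_ifs <;> simp
    rw [tsum_congr hpull, tsum_ite_eq]
    have hfiber : ∀ h : Fin (n + 1) → V,
        pE M z (ext h 0) * prodP M h * u (ext h n) =
        ∑' y : V, pE M z y * (wgt M y h * u (ext h n)) := by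
      intro h
      rw [tsum_eq_single (ext h 0)]
      · unfold wgt
        rw [if_pos rfl]
        ring
      · intro y hy
        unfold wgt
        rw [if_neg (fun e => hy e.symm)]
        simp
    rw [tsum_congr hfiber, ENNReal.tsum_comm]
    calc (∑' (y : V) (h : Fin (n + 1) → V), pE M z y * (wgt M y h * u (ext h n)))
        = ∑' y : V, pE M z y * ∑' h : Fin (n + 1) → V, wgt M y h * u (ext h n) := by
          exact tsum_congr fun y => ENNReal.tsum_mul_left
      _ = ∑' y : V, pE M z y * u y := tsum_congr fun y => by rw [IH y]
      _ = u z := hu z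

lemma mu_cyl' (M : MarkovChain V) (z : V) {n : ℕ} (g : Fin (n + 1) → V) :
    M.μ z {ω | ∀ i ≤ n, ω i = ext g i} = wgt M z g := by
  have hfin : M.μ z {ω | ∀ i ≤ n, ω i = ext g i} ≠ ∞ := by
    have := M.μ_prob z
    exact measure_ne_top _ _
  have h := M.μ_cyl z n (ext g)
  rw [← ENNReal.ofReal_toReal hfin, h]
  unfold wgt prodP
  split_ifs with h0
  · rw [ENNReal.ofReal_prod_of_nonneg (fun i _ => M.p_nonneg _ _)]
    rfl
  · simp

lemma mu_le_G (M : MarkovChain V) (z : V) (n : ℕ) (A : Set V) :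
    M.μ z {ω | ω n ∈ A} ≤
      ∑' g : Fin (n + 1) → V, if ext g n ∈ A then wgt M z g else 0 := by
  set S : Set (Fin (n + 1) → V) := {g | ext g n ∈ A} with hS
  have hsub : {ω : ℕ → V | ω n ∈ A} ⊆
      ⋃ g : S, {ω | ∀ i ≤ n, ω i = ext (g : Fin (n + 1) → V) i} := by
    intro ω hω
    have hg : ∀ i ≤ n, ext (fun j : Fin (n + 1) => ω j) i = ω i := by
      intro i hi
      rw [ext_le _ hi]
    refine mem_iUnion.2 ⟨⟨fun j : Fin (n + 1) => ω j, ?_⟩, ?_⟩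
    · show ext (fun j : Fin (n + 1) => ω j) n ∈ A
      rw [hg n le_rfl]
      exact hω
    · intro i hi
      exact (hg i hi).symm
  calc M.μ z {ω | ω n ∈ A}
      ≤ M.μ z (⋃ g : S, {ω | ∀ i ≤ n, ω i = ext (g : Fin (n + 1) → V) i}) :=
        measure_mono hsub
    _ ≤ ∑' g : S, M.μ z {ω | ∀ i ≤ n, ω i = ext (g : Fin (n + 1) → V) i} :=
        measure_iUnion_le _
    _ = ∑' g : S, wgt M z (g : Fin (n + 1) → V) :=
        tsum_congr fun g => mu_cyl' M z _
    _ = ∑' g : Fin (n + 1) → V, S.indicator (wgt M z) g := (tsum_subtype S (wgt M z))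
    _ = ∑' g : Fin (n + 1) → V, if ext g n ∈ A then wgt M z g else 0 :=
        tsum_congr fun g => by
          by_cases hg : ext g n ∈ A
          · rw [Set.indicator_of_mem (by exact hg), if_pos hg]
          · rw [Set.indicator_of_notMem (by exact hg), if_neg hg]

end SharpAux

open SharpAux in
open scoped ENNReal in
/-- A sharp harmonic function that is not identically `0` attains
values arbitrarily close to `1`. -/
theorem sharp_attains_values_close_to_one (M : MarkovChain V) (s : V → ℝ)
    (hs : IsSharp M s) (hne : ∃ v, s v ≠ 0) :
    ∀ ε : ℝ, 0 < ε → ∃ z : V, s z > 1 - ε := by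
  intro ε hε
  by_contra hcon
  push_neg at hcon
  obtain ⟨v, hv⟩ := hne
  obtain ⟨hharm, hIcc, hae⟩ := hs
  have hnn : ∀ x, 0 ≤ s x := fun x => (hIcc x).1
  have hle1 : ∀ x, s x ≤ 1 := fun x => (hIcc x).2
  have hv0 : 0 < s v := lt_of_le_of_ne (hnn v) (Ne.symm hv)
  haveI := M.μ_prob v
  -- almost surely the values converge to 0
  have hae0 : ∀ᵐ ω ∂ M.μ v, Tendsto (fun n => s (ω n)) atTop (𝓝 0) := by
    filter_upwards [hae v] with ω hω
    rcases hω with h0 | h1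
    · exact h0
    · exfalso
      have h1e : (1 : ℝ) ≤ 1 - ε :=
        le_of_tendsto h1 (Eventually.of_forall fun n => hcon (ω n))
      linarith
  set t : ℝ := s v / 2 with ht
  have ht0 : 0 < t := by positivity
  set C : ℕ → Set (ℕ → V) := fun n => {ω | ∀ m, n ≤ m → s (ω m) ≤ t} with hC
  have hmono : Monotone C := fun a b hab ω hω m hm => hω m (le_trans hab hm)
  have hcover : ∀ᵐ ω ∂ M.μ v, ω ∈ ⋃ n, C n := by
    filter_upwards [hae0] with ω hω
    have hev := hω.eventually (gt_mem_nhds ht0)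
    rw [eventually_atTop] at hev
    obtain ⟨N, hN⟩ := hev
    exact mem_iUnion.2 ⟨N, fun m hm => (hN m hm).le⟩
  have hone : M.μ v (⋃ n, C n) = 1 := by
    refine le_antisymm prob_le_one ?_
    have h0 : M.μ v (⋃ n, C n)ᶜ = 0 := by
      rw [Set.compl_def]
      exact hcover
    calc (1 : ℝ≥0∞) = M.μ v Set.univ := measure_univ.symm
      _ ≤ M.μ v ((⋃ n, C n) ∪ (⋃ n, C n)ᶜ) := by rw [Set.union_compl_self]
      _ ≤ M.μ v (⋃ n, C n) + M.μ v (⋃ n, C n)ᶜ := measure_union_le _ _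
      _ = M.μ v (⋃ n, C n) := by rw [h0, add_zero]
  have hsup : ⨆ n, M.μ v (C n) = 1 := by
    rw [← hmono.directed_le.measure_iUnion, hone]
  set δ : ℝ≥0∞ := ENNReal.ofReal (s v / 8) with hδ
  have hδ0 : δ ≠ 0 := by
    rw [hδ]
    simp only [ne_eq, ENNReal.ofReal_eq_zero, not_le]
    positivity
  have hlt : 1 - δ < ⨆ n, M.μ v (C n) := by
    rw [hsup]
    exact ENNReal.sub_lt_self ENNReal.one_ne_top one_ne_zero hδ0
  obtain ⟨n, hn⟩ := lt_iSup_iff.mp hlt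
  set A : Set V := {w | s w ≤ t} with hA
  set G : ℝ≥0∞ := ∑' g : Fin (n + 1) → V, if ext g n ∈ A then wgt M v g else 0 with hG
  set B : ℝ≥0∞ := ∑' g : Fin (n + 1) → V, if ext g n ∈ A then 0 else wgt M v g with hB
  have hCsub : C n ⊆ {ω | ω n ∈ A} := fun ω hω => hω n le_rfl
  have hGlb : 1 - δ < G :=
    lt_of_lt_of_le hn (le_trans (measure_mono hCsub) (mu_le_G M v n A))
  have hGB : G + B = 1 := by
    rw [hG, hB, ← ENNReal.tsum_add]
    have hsplit : (fun g : Fin (n + 1) → V =>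
        (if ext g n ∈ A then wgt M v g else 0) + (if ext g n ∈ A then 0 else wgt M v g)) =
        fun g => wgt M v g * (fun _ : V => (1 : ℝ≥0∞)) (ext g n) := by
      funext g
      split_ifs <;> simp
    rw [hsplit]
    exact wgt_sum M (fun _ => 1) (fun x => by simpa using pE_row M x) n v
  have hG1 : G ≤ 1 := le_trans le_self_add hGB.le
  have hGtop : G ≠ ∞ := ne_top_of_le_ne_top ENNReal.one_ne_top hG1
  have hBδ : B ≤ δ := by
    have h1 : (1 : ℝ≥0∞) ≤ G + δ := tsub_le_iff_right.mp hGlb.le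
    have h2 : B + G ≤ δ + G := by
      rw [add_comm B G, hGB]
      exact h1.trans (le_of_eq (add_comm G δ))
    exact (ENNReal.add_le_add_iff_right hGtop).mp h2
  have hmain : ENNReal.ofReal (s v) ≤ ENNReal.ofReal t * G + B := by
    have hsum := wgt_sum M (fun w => ENNReal.ofReal (s w)) (harmE M hharm hnn) n v
    rw [← hsum]
    have hterm : ∀ g : Fin (n + 1) → V,
        wgt M v g * ENNReal.ofReal (s (ext g n)) ≤
        (if ext g n ∈ A then wgt M v g * ENNReal.ofReal t else 0) +
          (if ext g n ∈ A then 0 else wgt M v g) := by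
      intro g
      split_ifs with hmem
      · rw [add_zero]
        exact mul_le_mul_right (ENNReal.ofReal_le_ofReal hmem) _
      · rw [zero_add]
        calc wgt M v g * ENNReal.ofReal (s (ext g n)) ≤ wgt M v g * 1 :=
            mul_le_mul_right (ENNReal.ofReal_le_one.mpr (hle1 _)) _
          _ = wgt M v g := mul_one _
    calc (∑' g : Fin (n + 1) → V, wgt M v g * ENNReal.ofReal (s (ext g n)))
        ≤ ∑' g : Fin (n + 1) → V,
            ((if ext g n ∈ A then wgt M v g * ENNReal.ofReal t else 0) +
              (if ext g n ∈ A then 0 else wgt M v g)) := ENNReal.tsum_le_tsum hterm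
      _ = (∑' g : Fin (n + 1) → V,
            (if ext g n ∈ A then wgt M v g * ENNReal.ofReal t else 0)) + B :=
          ENNReal.tsum_add
      _ = ENNReal.ofReal t * G + B := by
          congr 1
          have : ∀ g : Fin (n + 1) → V,
              (if ext g n ∈ A then wgt M v g * ENNReal.ofReal t else 0) =
              ENNReal.ofReal t * (if ext g n ∈ A then wgt M v g else 0) := by
            intro g
            split_ifs <;> simp [mul_comm]
          rw [tsum_congr this, ENNReal.tsum_mul_left]
  have hfinal : ENNReal.ofReal (s v) ≤ ENNReal.ofReal (t + s v / 8) := by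
    calc ENNReal.ofReal (s v) ≤ ENNReal.ofReal t * G + B := hmain
      _ ≤ ENNReal.ofReal t * 1 + δ := add_le_add (mul_le_mul_right hG1 _) hBδ
      _ = ENNReal.ofReal t + ENNReal.ofReal (s v / 8) := by rw [mul_one, hδ]
      _ = ENNReal.ofReal (t + s v / 8) := (ENNReal.ofReal_add ht0.le (by positivity)).symm
  have hlast : s v ≤ t + s v / 8 := by
    rwa [ENNReal.ofReal_le_ofReal_iff (by positivity)] at hfinal
  rw [ht] at hlast
  linarith
end

section
/- Let G be a transient network with a fixed vertex o, let h(v) denote the probability that random walk started at v ever visits o, let l ∈ (0,1), and let B = {v ∈ V : h(v) = l}. Suppose random walk started at o visits B almost surely. Then almost surely the walk visits B only finitely often, and the distribution of the first vertex of B visited by random walk from o coincides with the distribution of the last vertex of B visited. -/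
open MeasureTheory Filter Set Topology
open scoped Classical

/-- A network: a connected, countable, locally finite graph with positive edge
conductances, given together with the family of path-space laws `μ z` of the
associated random walk (which moves from `x` to `y` with probability
`p x y = c x y / π x`), characterised on cylinder sets. -/
structure Network (V : Type*) [Countable V] [MeasurableSpace V] where
  adj : V → V → Prop
  adj_symm : ∀ x y, adj x y → adj y x
  adj_irrefl : ∀ x, ¬ adj x x
  locFin : ∀ x, {y | adj x y}.Finite
  conn : ∀ x y : V, ∃ (n : ℕ) (w : ℕ → V),
    w 0 = x ∧ w n = y ∧ ∀ i < n, adj (w i) (w (i + 1))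
  /-- conductances: positive on edges, zero on non-edges -/
  c : V → V → ℝ
  c_symm : ∀ x y, c x y = c y x
  c_pos : ∀ x y, adj x y → 0 < c x y
  c_off : ∀ x y, ¬ adj x y → c x y = 0
  /-- transition probabilities `p x y = c x y / π x` -/
  p : V → V → ℝ
  p_def : ∀ x y, p x y = c x y / ∑' y', c x y'
  /-- the law of random walk started at `z`, on the path space `ℕ → V` -/
  μ : V → Measure (ℕ → V)
  μ_prob : ∀ z, IsProbabilityMeasure (μ z)
  μ_cyl : ∀ (z : V) (n : ℕ) (w : ℕ → V),
    (μ z {ω : ℕ → V | ∀ i ≤ n, ω i = w i}).toReal =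
      if w 0 = z then ∏ i ∈ Finset.range n, p (w i) (w (i + 1)) else 0

namespace Network

variable {V : Type*} [Countable V] [MeasurableSpace V]

/-- `π x`, the sum of conductances of the edges at `x`. -/
noncomputable def piv (G : Network V) (x : V) : ℝ := ∑' y, G.c x y

/-- The Green function: the expected number of visits to `y` (including time 0)
by random walk started at `x`. -/
noncomputable def green (G : Network V) (x y : V) : ℝ :=
  (∑' n : ℕ, G.μ x {ω : ℕ → V | ω n = y}).toReal

/-- The network is transient if the expected number of returns is finite. -/
def Transient (G : Network V) : Prop :=
  ∀ x : V, (∑' n : ℕ, G.μ x {ω : ℕ → V | ω n = x}) ≠ ⊤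

/-- The probability that random walk started at `v` ever visits `o`. -/
noncomputable def hitProb (G : Network V) (v o : V) : ℝ :=
  (G.μ v {ω : ℕ → V | ∃ n, ω n = o}).toReal

/-- `h : V → ℝ` is harmonic on the network if `h x = ∑_y p x y * h y` for all `x`. -/
def IsHarmonic (G : Network V) (h : V → ℝ) : Prop :=
  ∀ x, HasSum (fun y => G.p x y * h y) (h x)

/-- A harmonic function `s : V → [0,1]` is sharp if, for every starting vertex,
its values along the random walk trajectory converge to `0` or `1` almost surely. -/
def IsSharp (G : Network V) (s : V → ℝ) : Prop :=
  G.IsHarmonic s ∧ (∀ x, s x ∈ Set.Icc (0 : ℝ) 1) ∧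
  ∀ z, ∀ᵐ ω ∂ G.μ z,
    Tendsto (fun n => s (ω n)) atTop (𝓝 0) ∨ Tendsto (fun n => s (ω n)) atTop (𝓝 1)

end Network

/-- The event that the first vertex of `B` visited by the walk is `b`. -/
def Network.firstVisitAt {V : Type*} (B : Set V) (b : V) : Set (ℕ → V) :=
  {ω | ∃ n, ω n = b ∧ ∀ m < n, ω m ∉ B}

/-- The event that the last vertex of `B` visited by the walk is `b`. -/
def Network.lastVisitAt {V : Type*} (B : Set V) (b : V) : Set (ℕ → V) :=
  {ω | ∃ n, ω n = b ∧ ∀ m, n < m → ω m ∉ B}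

/-!
Each visit to `B` is followed by a visit to `o` with probability `l`, so `l` times the probability
of visiting `B` after time `k` is at most the probability of visiting `o` after time `k`, which
tends to `0` by transience: `B` is visited finitely often.

For `b ∈ B`, reversibility `π x p(x,y) = π y p(y,x)` turns the paths from `o` that first enter `B`
at `b` into the paths from `b` that reach `o` without returning to `B`, so
`π o P_o(first visit at b) = π b U`, where `U` is the expected number of visits to `o` from `b`
before the return to `B`. Likewise `P_o(last visit at b) = G(o,b) e` with `e` the probability
of never returning to `B` from `b`, and `π o G(o,b) = π b G(b,o) = π b l G(o,o)`. Splitting the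
visits to `o` from `b` at the first return to `B`, from where the Green function to `o` is again
`l G(o,o)`, gives `l G(o,o) = U + (1 - e) l G(o,o)`, i.e. `U = l G(o,o) e`.
-/

open Finset.HasAntidiagonal ENNReal in
theorem ENNReal.tsum_sum_antidiagonal (f : ℕ → ℕ → ℝ≥0∞) :
    ∑' n : ℕ, ∑ p ∈ antidiagonal n, f (p : ℕ × ℕ).1 p.2 = ∑' j, ∑' m, f j m := by
  rw [← ENNReal.tsum_prod, ← Finset.HasAntidiagonal.sigmaAntidiagonalEquivProd.tsum_eq,
    ENNReal.tsum_sigma']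
  exact tsum_congr fun n ↦ (Finset.tsum_subtype _ (fun p : ℕ × ℕ ↦ f p.1 p.2)).symm

lemma dependsOn_mem_iff {ι α : Type*} {A : Set (ι → α)} {s : Set ι} :
    DependsOn (· ∈ A) s ↔ ∀ ⦃x y⦄, (∀ i ∈ s, x i = y i) → x ∈ A → y ∈ A :=
  ⟨fun h _ _ hxy hx ↦ (h hxy).mp hx,
    fun h _ _ hxy ↦ propext ⟨h hxy, h fun i hi ↦ (hxy i hi).symm⟩⟩

lemma dependsOn_mem_inter {ι α : Type*} {A B : Set (ι → α)} {s : Set ι}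
    (hA : DependsOn (· ∈ A) s) (hB : DependsOn (· ∈ B) s) : DependsOn (· ∈ A ∩ B) s :=
  fun _ _ h ↦ congrArg₂ And (hA h) (hB h)

lemma dependsOn_setOf_apply {α : Type*} {i n : ℕ} (h : i ≤ n) (P : α → Prop) :
    DependsOn (· ∈ {ω : ℕ → α | P (ω i)}) (Iic n) :=
  fun _ _ hag ↦ congrArg P (hag i h)

namespace Network

open Function Finset.HasAntidiagonal

section Paths

variable {V : Type*}

def cyl (n : ℕ) (w : ℕ → V) : Set (ℕ → V) := {ω | ∀ i ≤ n, ω i = w i}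

/- The paths in `fixedPoints (trunc n)`, which stay put after time `n`, index the cylinders
`cyl n w` without repetition. -/
def trunc (n : ℕ) (ω : ℕ → V) : ℕ → V := fun k ↦ ω (min k n)

lemma trunc_apply_of_le {n k : ℕ} (h : k ≤ n) (ω : ℕ → V) : trunc n ω k = ω k := by
  simp [trunc, h]

lemma trunc_mem_fixedPoints (n : ℕ) (ω : ℕ → V) : trunc n ω ∈ fixedPoints (trunc n) := by
  funext k
  simp [trunc]

lemma trunc_eq_of_mem_cyl {n : ℕ} {ω w : ℕ → V} (hω : ω ∈ cyl n w) : trunc n ω = trunc n w :=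
  funext fun k ↦ hω _ (min_le_right k n)

lemma countable_fixedPoints_trunc [Countable V] (n : ℕ) :
    (fixedPoints (trunc (V := V) n)).Countable := by
  refine (countable_range fun f : Fin (n + 1) → V ↦ fun k ↦ f ⟨min k n, by omega⟩).mono ?_
  intro w hw
  exact ⟨fun i ↦ w i, hw⟩

lemma pairwiseDisjoint_cyl (n : ℕ) : (fixedPoints (trunc (V := V) n)).PairwiseDisjoint (cyl n) :=
  fun w hw w' hw' hne ↦ disjoint_left.2 fun ω hω hω' ↦
    hne (by rw [← hw.eq, ← hw'.eq, ← trunc_eq_of_mem_cyl hω, trunc_eq_of_mem_cyl hω'])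

lemma eq_biUnion_cyl {n : ℕ} {A : Set (ℕ → V)} (hA : DependsOn (· ∈ A) (Iic n)) :
    A = ⋃ w ∈ fixedPoints (trunc n) ∩ A, cyl n w := by
  ext ω
  simp only [mem_iUnion, exists_prop]
  constructor
  · intro hω
    have hagree : ∀ i ∈ Iic n, ω i = trunc n ω i := fun i hi ↦ (trunc_apply_of_le hi ω).symm
    exact ⟨trunc n ω, ⟨trunc_mem_fixedPoints n ω, dependsOn_mem_iff.1 hA hagree hω⟩, hagree⟩
  · rintro ⟨w, ⟨-, hwA⟩, hω⟩
    exact dependsOn_mem_iff.1 hA (fun i hi ↦ (hω i hi).symm) hwA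

lemma isPiSystem_cyl : IsPiSystem {S : Set (ℕ → V) | ∃ n w, cyl n w = S} := by
  rintro _ ⟨n, w, rfl⟩ _ ⟨m, u, rfl⟩ ⟨ω, hωw, hωu⟩
  refine ⟨max n m, ω, ?_⟩
  ext ω'
  simp only [cyl, mem_inter_iff]
  constructor
  · intro h
    exact ⟨fun i hi ↦ (h i (hi.trans (le_max_left n m))).trans (hωw i hi),
      fun i hi ↦ (h i (hi.trans (le_max_right n m))).trans (hωu i hi)⟩
  · rintro ⟨hw, hu⟩ i hi
    rcases le_or_gt i n with hin | hin
    · exact (hw i hin).trans (hωw i hin).symm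
    · have him : i ≤ m := by omega
      exact (hu i him).trans (hωu i him).symm

def shift (n : ℕ) (ω : ℕ → V) : ℕ → V := fun m ↦ ω (m + n)

lemma measurable_shift [MeasurableSpace V] (n : ℕ) : Measurable (shift (V := V) n) :=
  measurable_pi_lambda _ fun m ↦ measurable_pi_apply (m + n)

def append (n : ℕ) (w u : ℕ → V) : ℕ → V := fun k ↦ if k ≤ n then w k else u (k - n)

lemma append_of_le {n k : ℕ} (h : k ≤ n) (w u : ℕ → V) : append n w u k = w k := if_pos h

lemma append_add {n : ℕ} {w u : ℕ → V} (hu : u 0 = w n) (i : ℕ) : append n w u (n + i) = u i := by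
  rcases Nat.eq_zero_or_pos i with rfl | hi
  · simp [append, hu]
  · simp [append, show ¬ n + i ≤ n by omega]

lemma cyl_inter_shift_preimage_cyl {n m : ℕ} {w u : ℕ → V} (hu : u 0 = w n) :
    cyl n w ∩ shift n ⁻¹' cyl m u = cyl (n + m) (append n w u) := by
  ext ω
  simp only [mem_inter_iff, mem_preimage, cyl]
  constructor
  · rintro ⟨hw, hu'⟩ k hk
    rcases le_or_gt k n with hkn | hkn
    · rw [append_of_le hkn, hw k hkn]
    · obtain ⟨i, rfl⟩ := Nat.exists_eq_add_of_lt hkn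
      rw [add_assoc, append_add hu, ← hu' (i + 1) (by omega), add_comm]
      rfl
  · intro h
    refine ⟨fun k hk ↦ (h k (by omega)).trans (append_of_le hk w u), fun i hi ↦ ?_⟩
    change ω (i + n) = u i
    rw [h (i + n) (by omega), add_comm, append_add hu]

def reverse (n : ℕ) (w : ℕ → V) : ℕ → V := fun k ↦ w (n - min k n)

lemma reverse_apply_of_le {n k : ℕ} (h : k ≤ n) (w : ℕ → V) : reverse n w k = w (n - k) := by
  simp [reverse, h]

lemma reverse_mem_fixedPoints (n : ℕ) (w : ℕ → V) : reverse n w ∈ fixedPoints (trunc n) := by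
  funext k
  simp [reverse, trunc]

lemma reverse_reverse {n : ℕ} {w : ℕ → V} (hw : w ∈ fixedPoints (trunc n)) :
    reverse n (reverse n w) = w := by
  funext k
  rw [← hw.eq]
  simp only [reverse, trunc]
  congr 1
  omega

lemma dependsOn_reverse_preimage (n : ℕ) (A : Set (ℕ → V)) :
    DependsOn (· ∈ reverse n ⁻¹' A) (Iic n) :=
  dependsOn_mem_iff.2 fun ω ω' hag hω ↦ by
    have : reverse n ω = reverse n ω' := funext fun k ↦ hag _ (Nat.sub_le n _)
    rwa [mem_preimage, ← this]

def hitsFrom (k : ℕ) (S : Set V) : Set (ℕ → V) := {ω | ∃ n, k ≤ n ∧ ω n ∈ S}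

def firstEntry (k : ℕ) (S : Set V) (j : ℕ) : Set (ℕ → V) :=
  {ω | k ≤ j ∧ ω j ∈ S ∧ ∀ i, k ≤ i → i < j → ω i ∉ S}

def visitAvoiding (k : ℕ) (S : Set V) (o : V) (n : ℕ) : Set (ℕ → V) :=
  {ω | ω n = o ∧ ∀ m, k ≤ m → m ≤ n → ω m ∉ S}

lemma dependsOn_firstEntry (k : ℕ) (S : Set V) (j : ℕ) :
    DependsOn (· ∈ firstEntry k S j) (Iic j) :=
  dependsOn_mem_iff.2 fun _ _ hag ⟨hkj, hj, hbefore⟩ ↦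
    ⟨hkj, hag j (mem_Iic.2 le_rfl) ▸ hj,
      fun i hki hij ↦ hag i (mem_Iic.2 hij.le) ▸ hbefore i hki hij⟩

lemma pairwise_disjoint_firstEntry (k : ℕ) (S : Set V) :
    Pairwise (Disjoint on firstEntry (V := V) k S) := by
  refine (pairwise_disjoint_on _).2 fun j j' hjj' ↦ disjoint_left.2 ?_
  rintro ω ⟨hkj, hj, -⟩ ⟨-, -, hbefore⟩
  exact hbefore j hkj hjj' hj

lemma iUnion_firstEntry (k : ℕ) (S : Set V) : ⋃ j, firstEntry (V := V) k S j = hitsFrom k S := by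
  ext ω
  simp only [mem_iUnion]
  constructor
  · rintro ⟨j, hkj, hj, -⟩
    exact ⟨j, hkj, hj⟩
  · intro hω
    classical
    refine ⟨Nat.find hω, (Nat.find_spec hω).1, (Nat.find_spec hω).2, fun i hki hij hi ↦ ?_⟩
    exact Nat.find_min hω hij ⟨hki, hi⟩

lemma setOf_apply_eq_visitAvoiding_union (k : ℕ) (S : Set V) (o : V) (n : ℕ) :
    {ω : ℕ → V | ω n = o} = visitAvoiding k S o n ∪
      ⋃ p ∈ antidiagonal n, firstEntry k S p.1 ∩ shift p.1 ⁻¹' {ω | ω p.2 = o} := by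
  ext ω
  simp only [mem_union, mem_iUnion, mem_inter_iff, mem_preimage,
    Finset.HasAntidiagonal.mem_antidiagonal, exists_prop, Prod.exists]
  constructor
  · intro hω
    classical
    by_cases hvisit : ∃ m, (k ≤ m ∧ m ≤ n) ∧ ω m ∈ S
    · obtain ⟨⟨hkj, hjn⟩, hj⟩ := Nat.find_spec hvisit
      refine .inr ⟨Nat.find hvisit, n - Nat.find hvisit, by omega,
        ⟨hkj, hj, fun i hki hij hi ↦ Nat.find_min hvisit hij ⟨⟨hki, by omega⟩, hi⟩⟩, ?_⟩
      change ω (n - Nat.find hvisit + Nat.find hvisit) = o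
      rwa [Nat.sub_add_cancel hjn]
    · push Not at hvisit
      exact .inl ⟨hω, fun m hkm hmn ↦ hvisit m ⟨hkm, hmn⟩⟩
  · rintro (⟨hω, -⟩ | ⟨j, m, rfl, -, hω⟩)
    · exact hω
    · change ω (m + j) = o at hω
      rwa [add_comm]

lemma disjoint_visitAvoiding_firstEntry {k n j : ℕ} (hjn : j ≤ n) (S : Set V) (o : V)
    (F : Set (ℕ → V)) : Disjoint (visitAvoiding k S o n) (firstEntry k S j ∩ F) :=
  disjoint_left.2 fun _ ⟨_, havoid⟩ ⟨⟨hkj, hj, _⟩, _⟩ ↦ havoid j hkj hjn hj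

lemma hitsFrom_zero_singleton (o : V) : hitsFrom 0 {o} = {ω : ℕ → V | ∃ n, ω n = o} := by
  simp [hitsFrom]

lemma visitAvoiding_zero_singleton (o : V) (n : ℕ) : visitAvoiding 0 {o} o n = ∅ :=
  eq_empty_of_forall_notMem fun _ ⟨hn, havoid⟩ ↦ havoid n (Nat.zero_le n) le_rfl hn

lemma firstVisitAt_eq_iUnion {S : Set V} {b : V} (hb : b ∈ S) :
    firstVisitAt S b = ⋃ n, firstEntry 0 S n ∩ {ω | ω n = b} := by
  ext ω
  simp only [firstVisitAt, firstEntry, mem_iUnion, mem_inter_iff]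
  constructor
  · rintro ⟨n, hn, hbefore⟩
    exact ⟨n, ⟨Nat.zero_le n, hn ▸ hb, fun i _ hi ↦ hbefore i hi⟩, hn⟩
  · rintro ⟨n, ⟨-, -, hbefore⟩, hn⟩
    exact ⟨n, hn, fun m hm ↦ hbefore m (Nat.zero_le m) hm⟩

lemma lastVisitAt_eq_iUnion (S : Set V) (b : V) :
    lastVisitAt S b = ⋃ n, {ω | ω n = b} ∩ shift n ⁻¹' (hitsFrom 1 S)ᶜ := by
  ext ω
  simp only [lastVisitAt, hitsFrom, shift, mem_iUnion, mem_inter_iff, mem_preimage, mem_compl_iff,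
    mem_ofPred_eq]
  refine exists_congr fun n ↦ and_congr_right fun _ ↦ ⟨fun h ⟨m, hm, hmS⟩ ↦ h _ (by omega) hmS,
    fun h m hnm hmS ↦ h ⟨m - n, by omega, by rwa [Nat.sub_add_cancel hnm.le]⟩⟩

lemma pairwise_disjoint_setOf_apply_inter_shift_preimage {S : Set V} {b : V} (hb : b ∈ S) :
    Pairwise (Disjoint on fun n ↦ {ω : ℕ → V | ω n = b} ∩ shift n ⁻¹' (hitsFrom 1 S)ᶜ) := by
  refine (pairwise_disjoint_on _).2 fun n n' hnn' ↦ disjoint_left.2 ?_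
  rintro ω ⟨-, hnever⟩ ⟨hn', -⟩
  refine hnever ⟨n' - n, by omega, ?_⟩
  change ω (n' - n + n) ∈ S
  rwa [Nat.sub_add_cancel hnn'.le, hn']

lemma reverse_preimage_setOf_apply (n : ℕ) (x y : V) :
    reverse n ⁻¹' ({ω | ω n = y} ∩ {ω | ω 0 = x}) = {ω | ω n = x} ∩ {ω | ω 0 = y} := by
  ext ω
  simp [reverse_apply_of_le, and_comm]

lemma reverse_preimage_firstEntry {S : Set V} {b : V} (hb : b ∈ S) (n : ℕ) (o : V) :
    reverse n ⁻¹' (firstEntry 0 S n ∩ {ω | ω n = b} ∩ {ω | ω 0 = o}) =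
      visitAvoiding 1 S o n ∩ {ω | ω 0 = b} := by
  ext ω
  simp only [firstEntry, visitAvoiding, mem_preimage, mem_inter_iff, mem_ofPred_eq,
    reverse_apply_of_le le_rfl, reverse_apply_of_le (Nat.zero_le n), Nat.sub_self, Nat.sub_zero]
  constructor
  · rintro ⟨⟨⟨-, -, hbefore⟩, hb'⟩, ho⟩
    refine ⟨⟨ho, fun m h1m hmn hm ↦ hbefore (n - m) (Nat.zero_le _) (by omega) ?_⟩, hb'⟩
    rwa [reverse_apply_of_le (by omega), Nat.sub_sub_self hmn]
  · rintro ⟨⟨ho, havoid⟩, hb'⟩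
    refine ⟨⟨⟨Nat.zero_le n, hb' ▸ hb, fun i _ hin hi ↦ ?_⟩, hb'⟩, ho⟩
    rw [reverse_apply_of_le hin.le] at hi
    exact havoid (n - i) (by omega) (Nat.sub_le n i) hi

end Paths

open ENNReal

variable {V : Type*} [Countable V] [MeasurableSpace V] (G : Network V)

lemma c_nonneg (x y : V) : 0 ≤ G.c x y := by
  by_cases h : G.adj x y
  · exact (G.c_pos x y h).le
  · exact (G.c_off x y h).ge

lemma summable_c (x : V) : Summable (G.c x) :=
  summable_of_ne_finset_zero (s := (G.locFin x).toFinset) fun y hy ↦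
    G.c_off x y (by simpa using hy)

lemma measure_cyl (z : V) (n : ℕ) (w : ℕ → V) :
    G.μ z (cyl n w) =
      ENNReal.ofReal (if w 0 = z then ∏ i ∈ Finset.range n, G.p (w i) (w (i + 1)) else 0) := by
  have := G.μ_prob z
  rw [← G.μ_cyl, ofReal_toReal (measure_ne_top _ _)]
  rfl

lemma measure_setOf_apply_zero_eq (z v : V) :
    G.μ z {ω | ω 0 = v} = if v = z then 1 else 0 := by
  have hcyl : {ω : ℕ → V | ω 0 = v} = cyl 0 (fun _ ↦ v) := by
    ext ω
    simp [cyl]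
  rw [hcyl, measure_cyl]
  split_ifs <;> simp

lemma exists_adj (x : V) : ∃ y, G.adj x y := by
  obtain ⟨y, hy⟩ : ∃ y, y ≠ x := by
    -- on a single vertex `p x x = 0`, so the walk could not make its first step
    by_contra! hsingleton
    have := G.μ_prob x
    have huniv : cyl 1 (fun _ ↦ x) = univ :=
      eq_univ_of_forall fun ω i _ ↦ hsingleton (ω i)
    have h := G.measure_cyl x 1 (fun _ ↦ x)
    rw [huniv, measure_univ, if_pos rfl, Finset.prod_range_one, G.p_def,
      G.c_off x x (G.adj_irrefl x), zero_div, ofReal_zero] at h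
    exact one_ne_zero h
  obtain ⟨n, w, hw0, hwn, hstep⟩ := G.conn x y
  rcases Nat.eq_zero_or_pos n with rfl | hpos
  · exact absurd (hwn.symm.trans hw0) hy
  · exact ⟨w 1, hw0 ▸ hstep 0 hpos⟩

lemma piv_pos (x : V) : 0 < G.piv x := by
  obtain ⟨y, hy⟩ := G.exists_adj x
  exact (G.c_pos x y hy).trans_le
    ((G.summable_c x).le_tsum y fun y' _ ↦ G.c_nonneg x y')

lemma p_eq (x y : V) : G.p x y = G.c x y / G.piv x := G.p_def x y

lemma p_nonneg (x y : V) : 0 ≤ G.p x y := by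
  rw [p_eq]
  exact div_nonneg (G.c_nonneg x y) (G.piv_pos x).le

lemma piv_mul_p (x y : V) : G.piv x * G.p x y = G.piv y * G.p y x := by
  rw [p_eq, p_eq, mul_div_cancel₀ _ (G.piv_pos x).ne', mul_div_cancel₀ _ (G.piv_pos y).ne',
    G.c_symm]

/- If no measurable set separated `z ≠ z'`, the swap of `z` and `z'` applied to every coordinate
would fix every measurable set of paths; a measurable null set containing the paths started at
`z'` would then contain the paths started at `z`, which have full measure under `μ z`. -/
lemma separatesPoints (G : Network V) : MeasurableSpace.SeparatesPoints V := by
  refine MeasurableSpace.separatesPoints_iff.2 fun z z' hzz' ↦ by_contra fun hne ↦ ?_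
  set e := Equiv.swap z z'
  have he : ∀ S : Set V, MeasurableSet S → e ⁻¹' S = S := fun S hS ↦ by
    ext u
    rcases eq_or_ne u z with rfl | huz
    · simpa [e] using (hzz' S hS).symm
    rcases eq_or_ne u z' with rfl | huz'
    · simpa [e] using hzz' S hS
    · simp [e, Equiv.swap_apply_of_ne_of_ne huz huz']
  set T : (ℕ → V) → (ℕ → V) := fun ω k ↦ e (ω k)
  have hT : ∀ M : Set (ℕ → V), MeasurableSet M → T ⁻¹' M = M := by
    have hle : MeasurableSpace.pi ≤ MeasurableSpace.invariants T :=
      iSup_le fun i ↦ MeasurableSpace.comap_le_iff_le_map.2 fun S hS ↦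
        ⟨measurable_pi_apply i hS, congrArg (fun S ↦ (fun ω : ℕ → V ↦ ω i) ⁻¹' S) (he S hS)⟩
    exact fun M hM ↦ (hle M hM).2
  set N := toMeasurable (G.μ z) {ω | ω 0 = z'}
  have hN : G.μ z N = 0 := by
    rw [measure_toMeasurable, measure_setOf_apply_zero_eq, if_neg (Ne.symm hne)]
  have hsub : {ω : ℕ → V | ω 0 = z} ⊆ N := fun ω hω ↦ by
    rw [← hT N (measurableSet_toMeasurable _ _)]
    refine subset_toMeasurable _ _ ?_
    simp [T, e, show ω 0 = z from hω]
  have := measure_mono_null hsub hN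
  rw [measure_setOf_apply_zero_eq, if_pos rfl] at this
  exact one_ne_zero this

lemma measurableSingletonClass (G : Network V) : MeasurableSingletonClass V :=
  have := G.separatesPoints
  inferInstance

lemma measurableSet_vertices (G : Network V) (S : Set V) : MeasurableSet S :=
  have := G.measurableSingletonClass
  S.to_countable.measurableSet

lemma measurableSet_setOf_apply_mem (G : Network V) (n : ℕ) (S : Set V) :
    MeasurableSet {ω : ℕ → V | ω n ∈ S} :=
  measurable_pi_apply n (G.measurableSet_vertices S)

lemma measurableSet_cyl (G : Network V) (n : ℕ) (w : ℕ → V) : MeasurableSet (cyl n w) := by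
  have hcyl : cyl n w = ⋂ i, ⋂ (_ : i ≤ n), {ω : ℕ → V | ω i ∈ ({w i} : Set V)} := by
    ext ω
    simp [cyl]
  rw [hcyl]
  exact .iInter fun i ↦ .iInter fun _ ↦ G.measurableSet_setOf_apply_mem i _

lemma measurableSet_of_dependsOn (G : Network V) {n : ℕ} {A : Set (ℕ → V)}
    (hA : DependsOn (· ∈ A) (Iic n)) : MeasurableSet A := by
  rw [eq_biUnion_cyl hA]
  exact .biUnion ((countable_fixedPoints_trunc n).mono inter_subset_left)
    fun w _ ↦ G.measurableSet_cyl n w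

lemma measure_eq_tsum_cyl (z : V) {n : ℕ} {A : Set (ℕ → V)} (hA : DependsOn (· ∈ A) (Iic n)) :
    G.μ z A = ∑' w : ↥(fixedPoints (trunc n) ∩ A), G.μ z (cyl n w) := by
  conv_lhs => rw [eq_biUnion_cyl hA]
  exact measure_biUnion ((countable_fixedPoints_trunc n).mono inter_subset_left)
    ((pairwiseDisjoint_cyl n).subset inter_subset_left) fun w _ ↦ G.measurableSet_cyl n w

lemma measure_cyl_append (z : V) {n m : ℕ} {w u : ℕ → V} (hu : u 0 = w n) :
    G.μ z (cyl (n + m) (append n w u)) = G.μ z (cyl n w) * G.μ (w n) (cyl m u) := by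
  simp only [measure_cyl, append_of_le (Nat.zero_le n), if_pos hu]
  split_ifs
  · rw [← ofReal_mul (Finset.prod_nonneg fun i _ ↦ G.p_nonneg _ _), Finset.prod_range_add]
    congr 2
    · refine Finset.prod_congr rfl fun i hi ↦ ?_
      have hi : i < n := Finset.mem_range.1 hi
      rw [append_of_le hi.le, append_of_le hi]
    · refine Finset.prod_congr rfl fun i _ ↦ ?_
      rw [append_add hu, add_assoc, append_add hu]
  · simp

lemma generateFrom_cyl (G : Network V) :
    MeasurableSpace.generateFrom {S : Set (ℕ → V) | ∃ n w, cyl n w = S} = MeasurableSpace.pi := by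
  refine le_antisymm (MeasurableSpace.generateFrom_le ?_) ?_
  · rintro _ ⟨n, w, rfl⟩
    exact G.measurableSet_cyl n w
  rw [← generateFrom_measurableCylinders]
  refine MeasurableSpace.generateFrom_le fun t ht ↦ ?_
  obtain ⟨s, S, -, rfl⟩ := (mem_measurableCylinders t).1 ht
  have hdep : DependsOn (· ∈ cylinder s S) (Iic (s.sup id)) :=
    dependsOn_mem_iff.2 fun ω ω' hag hω ↦ by
      have : s.restrict ω = s.restrict ω' := funext fun i ↦ hag i (Finset.le_sup (f := id) i.2)
      rwa [mem_cylinder, ← this]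
  rw [eq_biUnion_cyl hdep]
  exact .biUnion ((countable_fixedPoints_trunc _).mono inter_subset_left)
    fun w _ ↦ MeasurableSpace.measurableSet_generateFrom ⟨_, w, rfl⟩

lemma measure_cyl_inter_shift_preimage (z : V) (n : ℕ) (w : ℕ → V) {F : Set (ℕ → V)}
    (hF : MeasurableSet F) :
    G.μ z (cyl n w ∩ shift n ⁻¹' F) = G.μ z (cyl n w) * G.μ (w n) F := by
  have := G.μ_prob z
  have := G.μ_prob (w n)
  have hmap : ∀ F, MeasurableSet F → Measure.map (shift n) ((G.μ z).restrict (cyl n w)) F =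
      G.μ z (cyl n w ∩ shift n ⁻¹' F) := fun F hF ↦ by
    rw [Measure.map_apply (measurable_shift n) hF,
      Measure.restrict_apply (measurable_shift n hF), inter_comm]
  suffices Measure.map (shift n) ((G.μ z).restrict (cyl n w)) = G.μ z (cyl n w) • G.μ (w n) by
    rw [← hmap F hF, this, Measure.smul_apply, smul_eq_mul]
  refine ext_of_generate_finite _ (G.generateFrom_cyl).symm isPiSystem_cyl ?_ ?_
  · rintro _ ⟨m, u, rfl⟩
    rw [hmap _ (G.measurableSet_cyl m u), Measure.smul_apply, smul_eq_mul]
    by_cases hu : u 0 = w n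
    · rw [cyl_inter_shift_preimage_cyl hu, measure_cyl_append G z hu]
    · have hempty : cyl n w ∩ shift n ⁻¹' cyl m u = ∅ :=
        eq_empty_of_forall_notMem fun ω ⟨hw, hu'⟩ ↦
          hu ((hu' 0 (Nat.zero_le m)).symm.trans (by simpa [shift] using hw n le_rfl))
      rw [hempty, measure_cyl G (w n), if_neg hu]
      simp
  · rw [hmap _ MeasurableSet.univ, Measure.smul_apply, preimage_univ, inter_univ,
      measure_univ, smul_eq_mul, mul_one]

lemma measure_inter_shift_preimage (z : V) {n : ℕ} {A F : Set (ℕ → V)}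
    (hA : DependsOn (· ∈ A) (Iic n)) (hF : MeasurableSet F) :
    G.μ z (A ∩ shift n ⁻¹' F) =
      ∑' w : ↥(fixedPoints (trunc n) ∩ A), G.μ z (cyl n w) * G.μ ((w : ℕ → V) n) F := by
  conv_lhs => rw [eq_biUnion_cyl hA, iUnion₂_inter]
  rw [measure_biUnion ((countable_fixedPoints_trunc n).mono inter_subset_left)
    (((pairwiseDisjoint_cyl n).subset inter_subset_left).mono fun _ ↦ inter_subset_left)
    fun w _ ↦ (G.measurableSet_cyl n w).inter (measurable_shift n hF)]
  exact tsum_congr fun w ↦ G.measure_cyl_inter_shift_preimage z n w hF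

lemma measure_inter_shift_preimage_of_forall (z : V) {n : ℕ} {A F : Set (ℕ → V)} {c : ℝ≥0∞}
    (hA : DependsOn (· ∈ A) (Iic n)) (hF : MeasurableSet F) (hc : ∀ ω ∈ A, G.μ (ω n) F = c) :
    G.μ z (A ∩ shift n ⁻¹' F) = G.μ z A * c := by
  rw [G.measure_inter_shift_preimage z hA hF, G.measure_eq_tsum_cyl z hA, ← ENNReal.tsum_mul_right]
  exact tsum_congr fun w ↦ by rw [hc w w.2.2]

lemma tsum_measure_inter_shift_preimage_of_forall (z : V) {n : ℕ} {A : Set (ℕ → V)}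
    {F : ℕ → Set (ℕ → V)} {c : ℝ≥0∞} (hA : DependsOn (· ∈ A) (Iic n))
    (hF : ∀ m, MeasurableSet (F m)) (hc : ∀ ω ∈ A, ∑' m, G.μ (ω n) (F m) = c) :
    ∑' m, G.μ z (A ∩ shift n ⁻¹' F m) = G.μ z A * c := by
  simp_rw [G.measure_inter_shift_preimage z hA (hF _)]
  rw [ENNReal.tsum_comm, G.measure_eq_tsum_cyl z hA, ← ENNReal.tsum_mul_right]
  exact tsum_congr fun w ↦ by rw [ENNReal.tsum_mul_left, hc w w.2.2]

lemma piv_mul_prod_p (n : ℕ) (w : ℕ → V) :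
    G.piv (w 0) * ∏ i ∈ Finset.range n, G.p (w i) (w (i + 1)) =
      G.piv (w n) * ∏ i ∈ Finset.range n, G.p (w (i + 1)) (w i) := by
  induction n with
  | zero => simp
  | succ n ih =>
    rw [Finset.prod_range_succ, Finset.prod_range_succ, ← mul_assoc, ih]
    linear_combination
      (∏ i ∈ Finset.range n, G.p (w (i + 1)) (w i)) * G.piv_mul_p (w n) (w (n + 1))

lemma piv_mul_measure_cyl_reverse (n : ℕ) (w : ℕ → V) :
    ENNReal.ofReal (G.piv (w 0)) * G.μ (w 0) (cyl n w) =
      ENNReal.ofReal (G.piv (w n)) * G.μ (w n) (cyl n (reverse n w)) := by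
  have hprod : ∏ i ∈ Finset.range n, G.p (reverse n w i) (reverse n w (i + 1)) =
      ∏ i ∈ Finset.range n, G.p (w (i + 1)) (w i) := by
    rw [← Finset.prod_range_reflect (fun i ↦ G.p (w (i + 1)) (w i))]
    refine Finset.prod_congr rfl fun i hi ↦ ?_
    have hi : i < n := Finset.mem_range.1 hi
    rw [reverse_apply_of_le hi.le, reverse_apply_of_le hi]
    congr 2 <;> omega
  have hstart : reverse n w 0 = w n := by rw [reverse_apply_of_le (Nat.zero_le n), Nat.sub_zero]
  rw [measure_cyl, measure_cyl, if_pos rfl, if_pos hstart, hprod, ← ofReal_mul (G.piv_pos _).le,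
    ← ofReal_mul (G.piv_pos _).le, piv_mul_prod_p]

lemma piv_mul_measure_eq_reverse {n : ℕ} {A : Set (ℕ → V)} {z y : V}
    (hA : DependsOn (· ∈ A) (Iic n)) (hzy : ∀ ω ∈ A, ω 0 = z ∧ ω n = y) :
    ENNReal.ofReal (G.piv z) * G.μ z A = ENNReal.ofReal (G.piv y) * G.μ y (reverse n ⁻¹' A) := by
  let e : ↥(fixedPoints (trunc n) ∩ A) ≃ ↥(fixedPoints (trunc n) ∩ reverse n ⁻¹' A) :=
    { toFun := fun w ↦ ⟨reverse n w, reverse_mem_fixedPoints n (w : ℕ → V), by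
        rw [mem_preimage, reverse_reverse w.2.1]
        exact w.2.2⟩
      invFun := fun w ↦ ⟨reverse n w, reverse_mem_fixedPoints n (w : ℕ → V), w.2.2⟩
      left_inv := fun w ↦ Subtype.ext (reverse_reverse w.2.1)
      right_inv := fun w ↦ Subtype.ext (reverse_reverse w.2.1) }
  rw [G.measure_eq_tsum_cyl z hA, G.measure_eq_tsum_cyl y (dependsOn_reverse_preimage n A),
    ← ENNReal.tsum_mul_left, ← ENNReal.tsum_mul_left, ← e.tsum_eq]
  refine tsum_congr fun w ↦ ?_
  obtain ⟨hz, hy⟩ := hzy w w.2.2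
  have := G.piv_mul_measure_cyl_reverse n w
  rw [hz, hy] at this
  exact this

lemma measure_inter_setOf_apply_zero (z : V) (A : Set (ℕ → V)) :
    G.μ z (A ∩ {ω | ω 0 = z}) = G.μ z A := by
  have := G.μ_prob z
  refine measure_inter_conull ((prob_compl_eq_zero_iff ?_).2 ?_)
  · exact G.measurableSet_setOf_apply_mem 0 {z}
  · rw [measure_setOf_apply_zero_eq, if_pos rfl]

noncomputable def egreen (x y : V) : ℝ≥0∞ := ∑' n, G.μ x {ω | ω n = y}

lemma piv_mul_egreen (x y : V) :
    ENNReal.ofReal (G.piv x) * G.egreen x y = ENNReal.ofReal (G.piv y) * G.egreen y x := by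
  rw [egreen, egreen, ← ENNReal.tsum_mul_left, ← ENNReal.tsum_mul_left]
  refine tsum_congr fun n ↦ ?_
  rw [← G.measure_inter_setOf_apply_zero x, ← G.measure_inter_setOf_apply_zero y,
    G.piv_mul_measure_eq_reverse (dependsOn_mem_inter (dependsOn_setOf_apply le_rfl (· = y))
      (dependsOn_setOf_apply (Nat.zero_le n) (· = x))) fun ω hω ↦ ⟨hω.2, hω.1⟩,
    reverse_preimage_setOf_apply]

lemma measurableSet_hitsFrom (G : Network V) (k : ℕ) (S : Set V) :
    MeasurableSet (hitsFrom k S) := by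
  rw [← iUnion_firstEntry]
  exact .iUnion fun j ↦ G.measurableSet_of_dependsOn (dependsOn_firstEntry k S j)

lemma measure_setOf_apply_eq_add_sum (z : V) (k : ℕ) (S : Set V) (o : V) (n : ℕ) :
    G.μ z {ω | ω n = o} = G.μ z (visitAvoiding k S o n) +
      ∑ p ∈ antidiagonal n, G.μ z (firstEntry k S p.1 ∩ shift p.1 ⁻¹' {ω | ω p.2 = o}) := by
  have hmeas : ∀ p : ℕ × ℕ,
      MeasurableSet (firstEntry k S p.1 ∩ shift p.1 ⁻¹' {ω : ℕ → V | ω p.2 = o}) := fun p ↦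
    (G.measurableSet_of_dependsOn (dependsOn_firstEntry k S p.1)).inter
      (measurable_shift p.1 (G.measurableSet_setOf_apply_mem p.2 {o}))
  have hdisj : (antidiagonal n : Set (ℕ × ℕ)).PairwiseDisjoint
      fun p ↦ firstEntry k S p.1 ∩ shift p.1 ⁻¹' {ω : ℕ → V | ω p.2 = o} := by
    intro p hp q hq hpq
    have hp : p.1 + p.2 = n := Finset.HasAntidiagonal.mem_antidiagonal.1 hp
    have hq : q.1 + q.2 = n := Finset.HasAntidiagonal.mem_antidiagonal.1 hq
    have hne : p.1 ≠ q.1 := fun h ↦ hpq (Prod.ext h (by omega))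
    exact (pairwise_disjoint_firstEntry k S hne).mono inter_subset_left inter_subset_left
  have hdisj' : Disjoint (visitAvoiding k S o n)
      (⋃ p ∈ antidiagonal n, firstEntry k S p.1 ∩ shift p.1 ⁻¹' {ω | ω p.2 = o}) :=
    disjoint_iUnion₂_right.2 fun p hp ↦ disjoint_visitAvoiding_firstEntry
      (antidiagonal.fst_le hp) S o _
  rw [setOf_apply_eq_visitAvoiding_union k S o n, measure_union hdisj'
    (.biUnion (Finset.countable_toSet _) fun p _ ↦ hmeas p),
    measure_biUnion_finset hdisj fun p _ ↦ hmeas p]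

/-- First-entrance decomposition of the visits to `o` at the first visit to `S` from time `k` on. -/
lemma egreen_eq_add (z : V) (k : ℕ) (S : Set V) (o : V) {c : ℝ≥0∞}
    (hc : ∀ v ∈ S, G.egreen v o = c) :
    G.egreen z o = ∑' n, G.μ z (visitAvoiding k S o n) + G.μ z (hitsFrom k S) * c := by
  have hentry : ∀ j, ∑' m, G.μ z (firstEntry k S j ∩ shift j ⁻¹' {ω | ω m = o}) =
      G.μ z (firstEntry k S j) * c := fun j ↦
    G.tsum_measure_inter_shift_preimage_of_forall z (dependsOn_firstEntry k S j)
      (fun m ↦ G.measurableSet_setOf_apply_mem m {o}) fun ω hω ↦ hc _ hω.2.1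
  rw [egreen, tsum_congr (G.measure_setOf_apply_eq_add_sum z k S o), ENNReal.tsum_add,
    ENNReal.tsum_sum_antidiagonal (fun j m ↦ G.μ z (firstEntry k S j ∩ shift j ⁻¹' {ω | ω m = o})),
    tsum_congr hentry, ENNReal.tsum_mul_right, ← measure_iUnion (pairwise_disjoint_firstEntry k S)
      fun j ↦ G.measurableSet_of_dependsOn (dependsOn_firstEntry k S j), iUnion_firstEntry]

lemma egreen_eq_mul (z o : V) : G.egreen z o = G.μ z (hitsFrom 0 {o}) * G.egreen o o := by
  simpa [visitAvoiding_zero_singleton] using G.egreen_eq_add z 0 {o} o (c := G.egreen o o) (by simp)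

lemma measure_hitsFrom_mul_le (z : V) (k : ℕ) {S : Set V} {o : V} {c : ℝ≥0∞}
    (hS : ∀ v ∈ S, G.μ v (hitsFrom 0 {o}) = c) :
    G.μ z (hitsFrom k S) * c ≤ G.μ z (hitsFrom k {o}) := by
  have hmeas : ∀ j, MeasurableSet (firstEntry k S j) := fun j ↦
    G.measurableSet_of_dependsOn (dependsOn_firstEntry k S j)
  calc G.μ z (hitsFrom k S) * c = ∑' j, G.μ z (firstEntry k S j) * c := by
        rw [← iUnion_firstEntry, measure_iUnion (pairwise_disjoint_firstEntry k S) hmeas,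
          ENNReal.tsum_mul_right]
    _ = ∑' j, G.μ z (firstEntry k S j ∩ shift j ⁻¹' hitsFrom 0 {o}) :=
        tsum_congr fun j ↦ (G.measure_inter_shift_preimage_of_forall z (dependsOn_firstEntry k S j)
          (G.measurableSet_hitsFrom 0 {o}) fun ω hω ↦ hS _ hω.2.1).symm
    _ = G.μ z (⋃ j, firstEntry k S j ∩ shift j ⁻¹' hitsFrom 0 {o}) :=
        (measure_iUnion (fun i j hij ↦ (pairwise_disjoint_firstEntry k S hij).mono
          inter_subset_left inter_subset_left)
          fun j ↦ (hmeas j).inter (measurable_shift j (G.measurableSet_hitsFrom 0 {o}))).symm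
    _ ≤ G.μ z (hitsFrom k {o}) := measure_mono <| iUnion_subset fun j ω ⟨⟨hkj, _⟩, m, _, hm⟩ ↦
        ⟨m + j, by omega, hm⟩

lemma tendsto_measure_hitsFrom_singleton {z o : V} (h : G.egreen z o ≠ ⊤) :
    Tendsto (fun k ↦ G.μ z (hitsFrom k {o})) atTop (𝓝 0) := by
  refine tendsto_of_tendsto_of_tendsto_of_le_of_le tendsto_const_nhds
    (ENNReal.tendsto_sum_nat_add _ h) (fun _ ↦ zero_le) fun k ↦ ?_
  have hsub : hitsFrom k {o} ⊆ ⋃ i, {ω : ℕ → V | ω (i + k) = o} := fun ω ⟨m, hkm, hm⟩ ↦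
    mem_iUnion.2 ⟨m - k, by rwa [mem_ofPred_eq, Nat.sub_add_cancel hkm]⟩
  exact (measure_mono hsub).trans (measure_iUnion_le _)

lemma ae_finite_setOf_apply_mem {z o : V} {S : Set V} {c : ℝ≥0∞} (hG : G.egreen z o ≠ ⊤)
    (hc : c ≠ 0) (hS : ∀ v ∈ S, G.μ v (hitsFrom 0 {o}) = c) :
    ∀ᵐ ω ∂G.μ z, {n | ω n ∈ S}.Finite := by
  have hsub : ∀ k, {ω : ℕ → V | ¬{n | ω n ∈ S}.Finite} ⊆ hitsFrom k S := fun k ω hω ↦ by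
    obtain ⟨n, hn, hkn⟩ := Set.Infinite.exists_gt hω k
    exact ⟨n, hkn.le, hn⟩
  have hle : ∀ k, G.μ z {ω | ¬{n | ω n ∈ S}.Finite} * c ≤ G.μ z (hitsFrom k {o}) := fun k ↦
    (mul_le_mul_left (measure_mono (hsub k)) c).trans (G.measure_hitsFrom_mul_le z k hS)
  rw [ae_iff]
  exact (mul_eq_zero.1 (nonpos_iff_eq_zero.1
    (ge_of_tendsto' (G.tendsto_measure_hitsFrom_singleton hG) hle))).resolve_right hc

lemma piv_mul_measure_firstVisitAt {S : Set V} {b : V} (hb : b ∈ S) (o : V) :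
    ENNReal.ofReal (G.piv o) * G.μ o (firstVisitAt S b) =
      ENNReal.ofReal (G.piv b) * ∑' n, G.μ b (visitAvoiding 1 S o n) := by
  have hdep : ∀ n, DependsOn (· ∈ firstEntry 0 S n ∩ {ω | ω n = b}) (Iic n) := fun n ↦
    dependsOn_mem_inter (dependsOn_firstEntry 0 S n) (dependsOn_setOf_apply le_rfl (· = b))
  rw [firstVisitAt_eq_iUnion hb, measure_iUnion (fun i j hij ↦
      (pairwise_disjoint_firstEntry 0 S hij).mono inter_subset_left inter_subset_left)
      fun n ↦ G.measurableSet_of_dependsOn (hdep n),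
    ← ENNReal.tsum_mul_left, ← ENNReal.tsum_mul_left]
  refine tsum_congr fun n ↦ ?_
  rw [← G.measure_inter_setOf_apply_zero o, ← G.measure_inter_setOf_apply_zero b,
    G.piv_mul_measure_eq_reverse (dependsOn_mem_inter (hdep n)
      (dependsOn_setOf_apply (Nat.zero_le n) (· = o))) fun ω hω ↦ ⟨hω.2, hω.1.2⟩,
    reverse_preimage_firstEntry hb]

lemma measure_lastVisitAt {S : Set V} {b : V} (hb : b ∈ S) (o : V) :
    G.μ o (lastVisitAt S b) = G.egreen o b * G.μ b (hitsFrom 1 S)ᶜ := by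
  rw [lastVisitAt_eq_iUnion,
    measure_iUnion (pairwise_disjoint_setOf_apply_inter_shift_preimage hb) fun n ↦
      (G.measurableSet_setOf_apply_mem n {b}).inter
        (measurable_shift n (G.measurableSet_hitsFrom 1 S).compl),
    egreen, ← ENNReal.tsum_mul_right]
  exact tsum_congr fun n ↦ G.measure_inter_shift_preimage_of_forall o
    (dependsOn_setOf_apply le_rfl (· = b)) (G.measurableSet_hitsFrom 1 S).compl
    fun ω hω ↦ by rw [show ω n = b from hω]

lemma measure_firstVisitAt_eq_measure_lastVisitAt {o : V} {S : Set V} {c : ℝ≥0∞}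
    (hG : G.egreen o o ≠ ⊤) (hS : ∀ v ∈ S, G.μ v (hitsFrom 0 {o}) = c) {b : V} (hb : b ∈ S) :
    G.μ o (firstVisitAt S b) = G.μ o (lastVisitAt S b) := by
  have := G.μ_prob b
  have hgreen : ∀ v ∈ S, G.egreen v o = c * G.egreen o o := fun v hv ↦ by
    rw [egreen_eq_mul, hS v hv]
  have hfin : G.μ b (hitsFrom 1 S) * (c * G.egreen o o) ≠ ⊤ :=
    mul_ne_top (measure_ne_top _ _) (mul_ne_top (hS b hb ▸ measure_ne_top _ _) hG)
  have hbefore : ∑' n, G.μ b (visitAvoiding 1 S o n) =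
      c * G.egreen o o * G.μ b (hitsFrom 1 S)ᶜ := by
    refine (ENNReal.add_left_inj hfin).1 ?_
    rw [← G.egreen_eq_add b 1 S o hgreen, hgreen b hb]
    calc c * G.egreen o o
        = c * G.egreen o o * (G.μ b (hitsFrom 1 S) + G.μ b (hitsFrom 1 S)ᶜ) := by
          rw [prob_add_prob_compl (G.measurableSet_hitsFrom 1 S), mul_one]
      _ = _ := by ring
  refine (ENNReal.mul_right_inj (ofReal_pos.2 (G.piv_pos o)).ne' ofReal_ne_top).1 ?_
  rw [G.piv_mul_measure_firstVisitAt hb, G.measure_lastVisitAt hb, ← mul_assoc, piv_mul_egreen,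
    hgreen b hb, hbefore]
  ring

end Network

theorem first_eq_last_visit_distribution_general {V : Type*} [Countable V] [MeasurableSpace V]
    (G : Network V) (hT : G.Transient) (o : V)
    (h : V → ℝ) (hdef : ∀ v, h v = G.hitProb v o)
    (l : ℝ) (hl : l ∈ Set.Ioo (0 : ℝ) 1)
    (B : Set V) (hB : B = {v | h v = l}) :
    (∀ᵐ ω ∂ G.μ o, {n : ℕ | ω n ∈ B}.Finite) ∧
    (∀ b ∈ B, G.μ o (Network.firstVisitAt B b) = G.μ o (Network.lastVisitAt B b)) := by
  have hS : ∀ v ∈ B, G.μ v (Network.hitsFrom 0 {o}) = ENNReal.ofReal l := fun v hv ↦ by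
    have := G.μ_prob v
    rw [hB, Set.mem_ofPred_eq, hdef, Network.hitProb] at hv
    rw [← hv, Network.hitsFrom_zero_singleton, ENNReal.ofReal_toReal (measure_ne_top _ _)]
  exact ⟨G.ae_finite_setOf_apply_mem (hT o) (by simpa using hl.1) hS,
    fun b hb ↦ G.measure_firstVisitAt_eq_measure_lastVisitAt (hT o) hS hb⟩

/-- Let `G` be a transient network with fixed vertex `o`, let
`h v` be the probability of ever visiting `o` from `v`, let `l ∈ (0,1)` and
`B = {v : h v = l}`. If random walk from `o` visits `B` almost surely, then it
almost surely visits `B` only finitely often, and the distribution of the first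
vertex of `B` visited coincides with that of the last vertex of `B` visited. -/
theorem first_eq_last_visit_distribution {V : Type*} [Countable V] [MeasurableSpace V]
    (G : Network V) (hT : G.Transient) (o : V)
    (h : V → ℝ) (hdef : ∀ v, h v = G.hitProb v o)
    (l : ℝ) (hl : l ∈ Set.Ioo (0 : ℝ) 1)
    (B : Set V) (hB : B = {v | h v = l})
    (hvisit : G.μ o {ω : ℕ → V | ∃ n, ω n ∈ B} = 1) :
    (∀ᵐ ω ∂ G.μ o, {n : ℕ | ω n ∈ B}.Finite) ∧
    (∀ b ∈ B, G.μ o (Network.firstVisitAt B b) = G.μ o (Network.lastVisitAt B b)) :=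
  first_eq_last_visit_distribution_general G hT o h hdef l hl B hB
end
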